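/- arXiv:2105.13939 — 10 statements merged into one kernel-verified Lean document; each statement's English description precedes it below -/
import Mathlib

section
/- Let n ≥ 1 and 1 ≤ k ≤ n, and let S_{n,k} = {p ∈ ℝ^n : 0 ≤ p_i ≤ 1/k for all i, and Σ_{i=1}^n p_i = 1}. Then the set of extreme points of S_{n,k} is exactly { (1/k)·Σ_{i∈I} e_i : I ⊆ [n], |I| = k }, where e_i denotes the i-th standard basis vector; in particular the number of extreme points of S_{n,k} equals the binomial coefficient C(n,k). -/
/-- One-coordinate extremality in the interval `[0, c]`. -/
lemma coord_extreme (a b x y c p : ℝ) (ha : 0 < a) (hb : 0 < b) (hab : a + b = 1)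
    (hx0 : 0 ≤ x) (hxc : x ≤ c) (hy0 : 0 ≤ y) (hyc : y ≤ c)
    (hp : a * x + b * y = p) (hpc : p = 0 ∨ p = c) : x = p ∧ y = p := by
  rcases hpc with h | h <;> subst h
  · constructor <;> [skip; skip] <;>
      apply le_antisymm <;> nlinarith
  · constructor <;> apply le_antisymm <;> nlinarith

/-- The extreme points of the capped simplex `S_{n,k}` are exactly the uniform
distributions on `k`-element subsets of `[n]`, and there are `C(n,k)` of them. -/
theorem extremePoints_cappedSimplex (n k : ℕ) (hn : 1 ≤ n) (hk : 1 ≤ k) (hkn : k ≤ n)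
    (S : Set (Fin n → ℝ))
    (hS : S = {p | (∀ i, 0 ≤ p i ∧ p i ≤ 1 / (k : ℝ)) ∧ ∑ i, p i = 1}) :
    (Set.extremePoints ℝ S =
      {p | ∃ I : Finset (Fin n), I.card = k ∧
        p = fun i => if i ∈ I then 1 / (k : ℝ) else 0}) ∧
    Nat.card (Set.extremePoints ℝ S) = Nat.choose n k := by
  have hk0 : (0:ℝ) < (k:ℝ) := by exact_mod_cast hk
  have hkne : (1:ℝ) / k ≠ 0 := by positivity
  have hkpos : (0:ℝ) < 1 / k := by positivity
  have main : Set.extremePoints ℝ S =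
      {p | ∃ I : Finset (Fin n), I.card = k ∧
        p = fun i => if i ∈ I then 1 / (k : ℝ) else 0} := by
    ext p
    simp only [Set.mem_setOf_eq, mem_extremePoints]
    constructor
    · rintro ⟨hpS, hext⟩
      rw [hS] at hpS
      obtain ⟨hbd, hsum⟩ := hpS
      -- every coordinate is 0 or 1/k
      have hcoord : ∀ i, p i = 0 ∨ p i = 1 / k := by
        by_contra hno
        push_neg at hno
        obtain ⟨i, hi0, hik⟩ := hno
        have hi0' : 0 < p i := lt_of_le_of_ne (hbd i).1 (Ne.symm hi0)
        have hik' : p i < 1 / k := lt_of_le_of_ne (hbd i).2 hik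
        -- find a second interior coordinate
        have : ∃ j, j ≠ i ∧ 0 < p j ∧ p j < 1 / k := by
          by_contra hno2
          push_neg at hno2
          -- all other coordinates are 0 or 1/k; derive contradiction
          have hother : ∀ j ∈ Finset.univ.erase i, p j = 0 ∨ p j = 1 / k := by
            intro j hj
            have hji : j ≠ i := (Finset.mem_erase.1 hj).1
            rcases eq_or_lt_of_le (hbd j).1 with h | h
            · exact Or.inl h.symm
            · exact Or.inr (le_antisymm (hbd j).2 (hno2 j hji h))
          set m := ((Finset.univ.erase i).filter (fun j => p j = 1 / k)).card with hm
          have hsum' : ∑ j ∈ Finset.univ.erase i, p j = m * (1 / k) := by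
            rw [← Finset.sum_filter_add_sum_filter_not (Finset.univ.erase i)
              (fun j => p j = 1 / k) p]
            have h1 : ∑ j ∈ (Finset.univ.erase i).filter (fun j => p j = 1 / k), p j
                = m * (1 / k) := by
              have he : ∑ j ∈ (Finset.univ.erase i).filter (fun j => p j = 1 / k), p j
                  = ∑ _j ∈ (Finset.univ.erase i).filter (fun j => p j = 1 / k), (1/(k:ℝ)) :=
                Finset.sum_congr rfl (fun j hj => (Finset.mem_filter.1 hj).2)
              rw [he, Finset.sum_const, nsmul_eq_mul]
            have h2 : ∑ j ∈ (Finset.univ.erase i).filter (fun j => ¬ p j = 1 / k), p j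
                = 0 := by
              apply Finset.sum_eq_zero
              intro j hj
              obtain ⟨hj1, hj2⟩ := Finset.mem_filter.1 hj
              rcases hother j hj1 with h | h
              · exact h
              · exact absurd h hj2
            rw [h1, h2, add_zero]
          have hsplit : p i + ∑ j ∈ Finset.univ.erase i, p j = 1 := by
            rw [← hsum]
            exact Finset.add_sum_erase Finset.univ p (Finset.mem_univ i)
          rw [hsum'] at hsplit
          -- p i = 1 - m/k with 0 < p i < 1/k, m ℕ : contradiction
          have hkk : (k:ℝ) * (1/k) = 1 := by field_simp
          have hmk : (m:ℝ) < k := by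
            by_contra hcon
            push_neg at hcon
            have := mul_le_mul_of_nonneg_right hcon hkpos.le
            linarith
          have hmk' : (m:ℝ) ≤ (k:ℝ) - 1 := by
            have : m < k := by exact_mod_cast hmk
            have : m + 1 ≤ k := this
            have := (Nat.cast_le (α := ℝ)).2 this
            push_cast at this
            linarith
          have : 1 / (k:ℝ) ≤ p i := by
            have hb1 : (m:ℝ) * (1/k) ≤ ((k:ℝ) - 1) * (1/k) :=
              mul_le_mul_of_nonneg_right hmk' hkpos.le
            have hb2 : ((k:ℝ) - 1) * (1/k) = 1 - 1/k := by field_simp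
            linarith
          linarith
        obtain ⟨j, hji, hj0, hjk⟩ := this
        set ε := min (min (p i) (p j)) (min (1/k - p i) (1/k - p j)) with hε
        have hεpos : 0 < ε := by
          apply lt_min <;> apply lt_min <;> linarith
        have hε1 : ε ≤ p i := le_trans (min_le_left _ _) (min_le_left _ _)
        have hε2 : ε ≤ p j := le_trans (min_le_left _ _) (min_le_right _ _)
        have hε3 : ε ≤ 1/k - p i := le_trans (min_le_right _ _) (min_le_left _ _)
        have hε4 : ε ≤ 1/k - p j := le_trans (min_le_right _ _) (min_le_right _ _)
        set x : Fin n → ℝ := fun l =>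
          p l + (if l = i then ε else 0) - (if l = j then ε else 0) with hx
        set y : Fin n → ℝ := fun l =>
          p l - (if l = i then ε else 0) + (if l = j then ε else 0) with hy
        have hxS : x ∈ S := by
          rw [hS]
          constructor
          · intro l
            simp only [hx]
            by_cases hli : l = i
            · subst hli
              rw [if_pos rfl, if_neg (fun h => hji h.symm)]
              constructor <;> linarith
            · rw [if_neg hli]
              by_cases hlj : l = j
              · subst hlj
                rw [if_pos rfl]
                have := hbd l
                constructor <;> linarith [this.1, this.2]
              · rw [if_neg hlj]
                have := hbd l
                constructor <;> linarith [this.1, this.2]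
          · simp only [hx]
            rw [Finset.sum_sub_distrib, Finset.sum_add_distrib]
            simp [hsum, Finset.sum_ite_eq]
        have hyS : y ∈ S := by
          rw [hS]
          constructor
          · intro l
            simp only [hy]
            by_cases hli : l = i
            · subst hli
              rw [if_pos rfl, if_neg (fun h => hji h.symm)]
              constructor <;> linarith
            · rw [if_neg hli]
              by_cases hlj : l = j
              · subst hlj
                rw [if_pos rfl]
                have := hbd l
                constructor <;> linarith [this.1, this.2]
              · rw [if_neg hlj]
                have := hbd l
                constructor <;> linarith [this.1, this.2]
          · simp only [hy]
            rw [Finset.sum_add_distrib, Finset.sum_sub_distrib]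
            simp [hsum, Finset.sum_ite_eq]
        have hpseg : p ∈ openSegment ℝ x y := by
          refine ⟨1/2, 1/2, by norm_num, by norm_num, by norm_num, ?_⟩
          funext l
          simp only [Pi.add_apply, Pi.smul_apply, smul_eq_mul, hx, hy]
          ring
        have hij : i ≠ j := fun h => hji h.symm
        have := (hext x hxS y hyS hpseg).1
        have hxi : x i = p i + ε := by
          simp [hx, hij]
        rw [this] at hxi
        linarith
      -- conclude p has the indicator form
      refine ⟨Finset.univ.filter (fun i => p i = 1/k), ?_, ?_⟩
      · -- cardinality k
        have hsum' : ∑ i, p i =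
            ((Finset.univ.filter (fun i => p i = 1/k)).card : ℝ) * (1/k) := by
          rw [← Finset.sum_filter_add_sum_filter_not Finset.univ (fun i => p i = 1/k) p]
          have h1 : ∑ i ∈ Finset.univ.filter (fun i => p i = 1/k), p i
              = ((Finset.univ.filter (fun i => p i = 1/k)).card : ℝ) * (1/k) := by
            have he : ∑ i ∈ Finset.univ.filter (fun i => p i = 1/k), p i
                = ∑ _i ∈ Finset.univ.filter (fun i => p i = 1/k), (1/(k:ℝ)) :=
              Finset.sum_congr rfl (fun j hj => (Finset.mem_filter.1 hj).2)
            rw [he, Finset.sum_const, nsmul_eq_mul]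
          have h2 : ∑ i ∈ Finset.univ.filter (fun i => ¬ p i = 1/k), p i = 0 := by
            apply Finset.sum_eq_zero
            intro j hj
            obtain ⟨_, hj2⟩ := Finset.mem_filter.1 hj
            rcases hcoord j with h | h
            · exact h
            · exact absurd h hj2
          rw [h1, h2, add_zero]
        rw [hsum] at hsum'
        have hdiv : ((Finset.univ.filter (fun i => p i = 1/k)).card : ℝ) / k = 1 := by
          rw [← mul_one_div]
          linarith
        have : ((Finset.univ.filter (fun i => p i = 1/k)).card : ℝ) = k :=
          (div_eq_one_iff_eq hk0.ne').1 hdiv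
        exact_mod_cast this
      · funext i
        have hmem : i ∈ Finset.univ.filter (fun i => p i = 1/k) ↔ p i = 1/k := by
          simp
        by_cases h : p i = 1/k
        · rw [if_pos (hmem.2 h)]; exact h
        · rw [if_neg (fun hc => h (hmem.1 hc))]
          rcases hcoord i with h0 | h0
          · exact h0
          · exact absurd h0 h
    · rintro ⟨I, hI, rfl⟩
      constructor
      · rw [hS]
        constructor
        · intro i
          by_cases h : i ∈ I <;> simp [h] <;> positivity
        · rw [Finset.sum_ite_mem, Finset.univ_inter, Finset.sum_const, hI, nsmul_eq_mul]
          field_simp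
      · rintro x hx y hy ⟨a, b, ha, hb, hab, hxy⟩
        rw [hS] at hx hy
        obtain ⟨hxb, -⟩ := hx
        obtain ⟨hyb, -⟩ := hy
        have hcoord : ∀ i, x i = (if i ∈ I then 1/(k:ℝ) else 0) ∧
            y i = (if i ∈ I then 1/(k:ℝ) else 0) := by
          intro i
          have heval : a * x i + b * y i = (if i ∈ I then 1/(k:ℝ) else 0) := by
            have := congrFun hxy i
            simpa using this
          exact coord_extreme a b (x i) (y i) (1/k) _ ha hb hab
            (hxb i).1 (hxb i).2 (hyb i).1 (hyb i).2 heval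
            (by by_cases h : i ∈ I <;> simp [h])
        constructor <;> funext i
        · exact (hcoord i).1
        · exact (hcoord i).2
  refine ⟨main, ?_⟩
  rw [main]
  have hinj : Function.Injective
      (fun I : {I : Finset (Fin n) // I.card = k} =>
        (fun i => if i ∈ I.1 then 1 / (k : ℝ) else 0 : Fin n → ℝ)) := by
    rintro ⟨I, hI⟩ ⟨J, hJ⟩ h
    simp only [Subtype.mk_eq_mk]
    ext i
    have hci := congrFun h i
    simp only at hci
    constructor
    · intro hm
      by_contra hJm
      rw [if_pos hm, if_neg hJm] at hci
      exact hkne hci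
    · intro hm
      by_contra hIm
      rw [if_neg hIm, if_pos hm] at hci
      exact hkne hci.symm
  have hrange : {p : Fin n → ℝ | ∃ I : Finset (Fin n), I.card = k ∧
      p = fun i => if i ∈ I then 1 / (k : ℝ) else 0} =
      Set.range (fun I : {I : Finset (Fin n) // I.card = k} =>
        (fun i => if i ∈ I.1 then 1 / (k : ℝ) else 0 : Fin n → ℝ)) := by
    ext p
    constructor
    · rintro ⟨I, hI, rfl⟩
      exact ⟨⟨I, hI⟩, rfl⟩
    · rintro ⟨⟨I, hI⟩, rfl⟩
      exact ⟨I, hI, rfl⟩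
  rw [hrange, Nat.card_range_of_injective hinj]
  rw [Nat.card_eq_fintype_card]
  simpa using Fintype.card_finset_len (α := Fin n) k
end

section
/- Let k ≥ 1 and α ∈ [0,1]^n with k·α_i ∈ {1,…,k} for every i, and let K_α = {p ∈ ℝ^n : 0 ≤ p_i ≤ α_i for all i, Σ_{i=1}^n p_i = 1}. If p is an extreme point of K_α, then the support supp(p) = {i : p_i ≠ 0} has cardinality at most k, and k·p_i is an integer in {0,1,…,k} for every i ∈ [n]. -/
/-- Any extreme point `p` of the `α`-set `K_α` has support of cardinality at most `k`,
and `k · p i` is an integer in `{0, 1, …, k}` for every coordinate `i`. -/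
theorem alphaSet_extremePoint_support_card_le (n k : ℕ) (hk : 1 ≤ k) (α : Fin n → ℝ)
    (hα01 : ∀ i, 0 ≤ α i ∧ α i ≤ 1)
    (hα : ∀ i, ∃ m : ℕ, 1 ≤ m ∧ m ≤ k ∧ (k : ℝ) * α i = m)
    (K : Set (Fin n → ℝ))
    (hK : K = {p | (∀ i, 0 ≤ p i ∧ p i ≤ α i) ∧ ∑ i, p i = 1})
    (p : Fin n → ℝ) (hp : p ∈ Set.extremePoints ℝ K) :
    {i | p i ≠ 0}.ncard ≤ k ∧ ∀ i, ∃ m : ℕ, m ≤ k ∧ (k : ℝ) * p i = m := by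
  classical
  subst hK
  obtain ⟨⟨hbd, hsum⟩, hext⟩ := hp
  have hkpos : (0:ℝ) < k := by exact_mod_cast hk
  -- step 1: no two fractional coordinates
  have hfrac : ∀ i j, i ≠ j → 0 < p i → p i < α i → 0 < p j → p j < α j → False := by
    intro i j hij hi1 hi2 hj1 hj2
    set ε := min (min (p i) (α i - p i)) (min (p j) (α j - p j)) with hε
    have hεpos : 0 < ε := lt_min (lt_min hi1 (by linarith)) (lt_min hj1 (by linarith))
    have hε1 : ε ≤ p i := le_trans (min_le_left _ _) (min_le_left _ _)
    have hε2 : ε ≤ α i - p i := le_trans (min_le_left _ _) (min_le_right _ _)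
    have hε3 : ε ≤ p j := le_trans (min_le_right _ _) (min_le_left _ _)
    have hε4 : ε ≤ α j - p j := le_trans (min_le_right _ _) (min_le_right _ _)
    set q : Fin n → ℝ := fun t => p t + (if t = i then ε else 0) - (if t = j then ε else 0)
      with hq
    set r : Fin n → ℝ := fun t => p t - (if t = i then ε else 0) + (if t = j then ε else 0)
      with hr
    have hqmem : q ∈ {p : Fin n → ℝ | (∀ i, 0 ≤ p i ∧ p i ≤ α i) ∧ ∑ i, p i = 1} := by
      constructor
      · intro t
        simp only [hq]
        split_ifs with h1 h2 h2
        · exact absurd (h1.symm.trans h2) hij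
        · subst h1; constructor <;> linarith
        · subst h2; constructor <;> linarith
        · simp only [add_zero, sub_zero]; exact hbd t
      · simp only [hq]
        rw [Finset.sum_sub_distrib, Finset.sum_add_distrib]
        simp [Finset.sum_ite_eq', hsum]
    have hrmem : r ∈ {p : Fin n → ℝ | (∀ i, 0 ≤ p i ∧ p i ≤ α i) ∧ ∑ i, p i = 1} := by
      constructor
      · intro t
        simp only [hr]
        split_ifs with h1 h2 h2
        · exact absurd (h1.symm.trans h2) hij
        · subst h1; constructor <;> linarith
        · subst h2; constructor <;> linarith
        · simp only [sub_zero, add_zero]; exact hbd t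
      · simp only [hr]
        rw [Finset.sum_add_distrib, Finset.sum_sub_distrib]
        simp [Finset.sum_ite_eq', hsum]
    have hmid : p ∈ openSegment ℝ q r := by
      refine ⟨1/2, 1/2, by norm_num, by norm_num, by norm_num, ?_⟩
      funext t
      simp [hq, hr, Pi.add_apply, Pi.smul_apply, smul_eq_mul]
      ring
    have := hext hqmem hrmem hmid
    have hqi : q i = p i + ε := by simp [hq, hij]
    rw [this] at hqi
    linarith
  -- integer function from hα
  choose mα hmα1 hmα2 hmα3 using hα
  set g : Fin n → ℤ := fun j => if p j = 0 then 0 else (mα j : ℤ) with hg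
  -- step 2: every k * p i is an integer
  have hint : ∀ i, ∃ m : ℤ, (k : ℝ) * p i = m := by
    intro i
    by_cases hi0 : p i = 0
    · exact ⟨0, by simp [hi0]⟩
    by_cases hiα : p i = α i
    · exact ⟨mα i, by rw [hiα]; exact_mod_cast hmα3 i⟩
    have hi1 : 0 < p i := lt_of_le_of_ne (hbd i).1 (Ne.symm hi0)
    have hi2 : p i < α i := lt_of_le_of_ne (hbd i).2 hiα
    have hothers : ∀ j ≠ i, (k : ℝ) * p j = g j := by
      intro j hji
      by_cases hj0 : p j = 0
      · simp [hg, hj0]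
      by_cases hjα : p j = α j
      · simp only [hg, hj0, if_neg, if_false]
        rw [hjα]
        push_cast
        exact hmα3 j
      · exact absurd (hfrac j i hji (lt_of_le_of_ne (hbd j).1 (Ne.symm hj0))
          (lt_of_le_of_ne (hbd j).2 hjα) hi1 hi2) (fun h => h)
    refine ⟨(k : ℤ) - ∑ j ∈ Finset.univ.erase i, g j, ?_⟩
    have hsplit : p i = 1 - ∑ j ∈ Finset.univ.erase i, p j := by
      have := Finset.add_sum_erase Finset.univ p (Finset.mem_univ i)
      linarith [hsum ▸ this]
    rw [hsplit]
    push_cast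
    rw [mul_sub, mul_one, Finset.mul_sum]
    congr 1
    apply Finset.sum_congr rfl
    intro j hj
    exact hothers j (Finset.ne_of_mem_erase hj)
  -- step 3: natural number bounds
  have hmain : ∀ i, ∃ m : ℕ, m ≤ k ∧ (k : ℝ) * p i = m := by
    intro i
    obtain ⟨z, hz⟩ := hint i
    have h0 : (0:ℝ) ≤ (k:ℝ) * p i := mul_nonneg hkpos.le (hbd i).1
    have h1 : (k:ℝ) * p i ≤ k := by
      calc (k:ℝ) * p i ≤ k * α i := by
            exact mul_le_mul_of_nonneg_left (hbd i).2 hkpos.le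
        _ ≤ k * 1 := mul_le_mul_of_nonneg_left (hα01 i).2 hkpos.le
        _ = k := mul_one _
    rw [hz] at h0 h1
    have hz0 : 0 ≤ z := by exact_mod_cast h0
    have hzk : z ≤ (k : ℤ) := by exact_mod_cast h1
    refine ⟨z.toNat, ?_, ?_⟩
    · omega
    · rw [hz]
      exact_mod_cast (Int.toNat_of_nonneg hz0).symm
  refine ⟨?_, hmain⟩
  -- step 4: support cardinality
  choose m hmk hm using hmain
  have hsumm : ∑ i, m i = k := by
    have : ((∑ i, m i : ℕ) : ℝ) = k := by
      push_cast
      calc (∑ i, (m i : ℝ)) = ∑ i, (k:ℝ) * p i := by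
            exact Finset.sum_congr rfl (fun i _ => (hm i).symm)
        _ = (k:ℝ) * ∑ i, p i := by rw [Finset.mul_sum]
        _ = k := by rw [hsum, mul_one]
    exact_mod_cast this
  have hsetfin : {i | p i ≠ 0} = ↑(Finset.univ.filter (fun i => p i ≠ 0)) := by
    ext i; simp
  rw [hsetfin, Set.ncard_coe_finset]
  calc (Finset.univ.filter (fun i => p i ≠ 0)).card
      ≤ ∑ i ∈ Finset.univ.filter (fun i => p i ≠ 0), m i := by
        rw [Finset.card_eq_sum_ones]
        apply Finset.sum_le_sum
        intro i hi
        simp only [Finset.mem_filter] at hi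
        by_contra h
        have hmi0 : m i = 0 := by omega
        have hz : (k:ℝ) * p i = 0 := by rw [hm i, hmi0]; norm_num
        exact hi.2 ((mul_eq_zero.mp hz).resolve_left (ne_of_gt hkpos))
    _ ≤ ∑ i, m i := Finset.sum_le_sum_of_subset (Finset.filter_subset _ _)
    _ = k := hsumm
end

section
/- Let k ≥ 1 and α ∈ [0,1]^n with k·α_i ∈ {1,…,k} for every i, and let K_α = {p ∈ ℝ^n : 0 ≤ p_i ≤ α_i for all i, Σ_{i=1}^n p_i = 1}. Then the map T sending an extreme point p of K_α to the integer vector (k·p_1, …, k·p_n) is a well-defined injective map from the extreme points of K_α into the set of functions m : [n] → ℕ with Σ_{i=1}^n m(i) = k and |{i : m(i) ≠ 0}| ≤ k. -/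
open Finset

/-- An extreme point of the α-set has at most one coordinate strictly between the bounds. -/
lemma alphaSet_extreme_subsingleton (n : ℕ) (α : Fin n → ℝ) (p : Fin n → ℝ)
    (hp : p ∈ Set.extremePoints ℝ {q : Fin n → ℝ | (∀ i, 0 ≤ q i ∧ q i ≤ α i) ∧ ∑ i, q i = 1})
    {i j : Fin n} (hij : i ≠ j) (hi : 0 < p i ∧ p i < α i) (hj : 0 < p j ∧ p j < α j) :
    False := by
  obtain ⟨⟨hbd, hsum⟩, hext⟩ := hp
  set ε : ℝ := min (min (p i) (α i - p i)) (min (p j) (α j - p j)) with hε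
  have hε0 : 0 < ε := by
    apply lt_min <;> apply lt_min <;> linarith [hi.1, hi.2, hj.1, hj.2]
  have hεi1 : ε ≤ p i := le_trans (min_le_left _ _) (min_le_left _ _)
  have hεi2 : ε ≤ α i - p i := le_trans (min_le_left _ _) (min_le_right _ _)
  have hεj1 : ε ≤ p j := le_trans (min_le_right _ _) (min_le_left _ _)
  have hεj2 : ε ≤ α j - p j := le_trans (min_le_right _ _) (min_le_right _ _)
  set v : Fin n → ℝ := fun t => (if t = i then ε else 0) + (if t = j then -ε else 0) with hv
  have hvsum : ∑ t, v t = 0 := by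
    simp only [hv, Finset.sum_add_distrib, Finset.sum_ite_eq' Finset.univ,
      Finset.mem_univ, if_true]
    ring
  have hvi : v i = ε := by simp [hv, hij]
  have hvj : v j = -ε := by simp [hv, hij.symm]
  have hvt : ∀ t, t ≠ i → t ≠ j → v t = 0 := by intro t h1 h2; simp [hv, h1, h2]
  have hx1 : (p + v) ∈ {q : Fin n → ℝ | (∀ i, 0 ≤ q i ∧ q i ≤ α i) ∧ ∑ i, q i = 1} := by
    constructor
    · intro t
      by_cases h1 : t = i
      · subst h1; simp only [Pi.add_apply, hvi]
        constructor <;> linarith [hi.1, hi.2]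
      by_cases h2 : t = j
      · subst h2; simp only [Pi.add_apply, hvj]
        constructor <;> linarith [hj.1, hj.2]
      · simp only [Pi.add_apply, hvt t h1 h2, add_zero]; exact hbd t
    · simp [Finset.sum_add_distrib, hsum, hvsum]
  have hx2 : (p - v) ∈ {q : Fin n → ℝ | (∀ i, 0 ≤ q i ∧ q i ≤ α i) ∧ ∑ i, q i = 1} := by
    constructor
    · intro t
      by_cases h1 : t = i
      · subst h1; simp only [Pi.sub_apply, hvi]
        constructor <;> linarith [hi.1, hi.2]
      by_cases h2 : t = j
      · subst h2; simp only [Pi.sub_apply, hvj]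
        constructor <;> linarith [hj.1, hj.2]
      · simp only [Pi.sub_apply, hvt t h1 h2, sub_zero]; exact hbd t
    · simp [Finset.sum_sub_distrib, hsum, hvsum]
  have hseg : p ∈ openSegment ℝ (p + v) (p - v) := by
    refine ⟨1/2, 1/2, by norm_num, by norm_num, by norm_num, ?_⟩
    funext t
    simp only [Pi.add_apply, Pi.sub_apply, Pi.smul_apply, smul_eq_mul]
    ring
  have := hext hx1 hx2 hseg
  have : (p + v) i = p i := by rw [this]
  simp only [Pi.add_apply, hvi] at this
  linarith

/-- For an extreme point of the α-set, every coordinate times k is a natural number. -/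
lemma alphaSet_extreme_int (n k : ℕ) (hk : 1 ≤ k) (α : Fin n → ℝ)
    (hα01 : ∀ i, 0 ≤ α i ∧ α i ≤ 1)
    (hα : ∀ i, ∃ m : ℕ, 1 ≤ m ∧ m ≤ k ∧ (k : ℝ) * α i = m)
    (p : Fin n → ℝ)
    (hp : p ∈ Set.extremePoints ℝ {q : Fin n → ℝ | (∀ i, 0 ≤ q i ∧ q i ≤ α i) ∧ ∑ i, q i = 1}) :
    ∀ i, ∃ m : ℕ, (k : ℝ) * p i = m := by
  obtain ⟨⟨hbd, hsum⟩, -⟩ := id hp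
  have hbdry : ∀ i, ¬(0 < p i ∧ p i < α i) → ∃ m : ℕ, (k : ℝ) * p i = m := by
    intro i h
    rcases lt_or_eq_of_le (hbd i).1 with h0 | h0
    · rcases lt_or_eq_of_le (hbd i).2 with h1 | h1
      · exact absurd ⟨h0, h1⟩ h
      · obtain ⟨m, -, -, hm⟩ := hα i
        exact ⟨m, by rw [h1]; exact hm⟩
    · exact ⟨0, by rw [← h0]; simp⟩
  by_cases hS : ∃ i₀, 0 < p i₀ ∧ p i₀ < α i₀
  · obtain ⟨i₀, hi₀⟩ := hS
    have honly : ∀ j, j ≠ i₀ → ∃ m : ℕ, (k : ℝ) * p j = m := by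
      intro j hj
      apply hbdry
      intro hjS
      exact alphaSet_extreme_subsingleton n α p hp hj hjS hi₀
    have h' : ∀ j, ∃ m : ℕ, j ≠ i₀ → (k : ℝ) * p j = m := by
      intro j
      by_cases h : j = i₀
      · exact ⟨0, fun hj => absurd h hj⟩
      · obtain ⟨m, hm⟩ := honly j h; exact ⟨m, fun _ => hm⟩
    choose m hm using h'
    set N : ℕ := ∑ j ∈ Finset.univ.erase i₀, m j with hN
    have hNr : (N : ℝ) = (k : ℝ) - (k : ℝ) * p i₀ := by
      push_cast [hN]
      rw [Finset.sum_congr rfl (fun j hj => (hm j (Finset.mem_erase.1 hj).1).symm)]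
      rw [← Finset.mul_sum]
      have : ∑ j ∈ Finset.univ.erase i₀, p j = 1 - p i₀ := by
        have := Finset.add_sum_erase Finset.univ p (Finset.mem_univ i₀)
        rw [hsum] at this
        linarith
      rw [this]; ring
    have hNk : N ≤ k := by
      have : (N : ℝ) ≤ (k : ℝ) := by nlinarith [hi₀.1, (Nat.cast_nonneg k : (0:ℝ) ≤ k)]
      exact_mod_cast this
    intro i
    by_cases h : i = i₀
    · subst h
      refine ⟨k - N, ?_⟩
      rw [Nat.cast_sub hNk]
      linarith
    · exact honly i h
  · intro i
    apply hbdry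
    intro h
    exact hS ⟨i, h⟩

/-- The map sending an extreme point `p` of the `α`-set `K_α` to the integer vector
`(k·p_1, …, k·p_n)` is a well-defined injective map from the extreme points of `K_α`
into the multisets over `[n]`, i.e. functions `m : [n] → ℕ` with `Σ m i = k` and
support of cardinality at most `k`. -/
theorem alphaSet_extremePoints_inject_into_multisets (n k : ℕ) (hk : 1 ≤ k)
    (α : Fin n → ℝ)
    (hα01 : ∀ i, 0 ≤ α i ∧ α i ≤ 1)
    (hα : ∀ i, ∃ m : ℕ, 1 ≤ m ∧ m ≤ k ∧ (k : ℝ) * α i = m)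
    (K : Set (Fin n → ℝ))
    (hK : K = {p | (∀ i, 0 ≤ p i ∧ p i ≤ α i) ∧ ∑ i, p i = 1}) :
    ∃ T : (Set.extremePoints ℝ K) → (Fin n → ℕ),
      (∀ p : Set.extremePoints ℝ K, ∀ i, ((T p i : ℝ)) = k * (p : Fin n → ℝ) i) ∧
      (∀ p : Set.extremePoints ℝ K,
        (∑ i, T p i = k) ∧ {i | T p i ≠ 0}.ncard ≤ k) ∧
      Function.Injective T := by
  subst hK
  refine ⟨fun p i => ⌊(k : ℝ) * (p : Fin n → ℝ) i⌋₊, ?_, ?_, ?_⟩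
  case refine_1 =>
    intro p i
    obtain ⟨m, hm⟩ := alphaSet_extreme_int n k hk α hα01 hα p p.2 i
    simp only [hm, Nat.floor_natCast]
  all_goals
    have hT : ∀ p : Set.extremePoints ℝ
        {q : Fin n → ℝ | (∀ i, 0 ≤ q i ∧ q i ≤ α i) ∧ ∑ i, q i = 1},
        ∀ i, ((⌊(k : ℝ) * (p : Fin n → ℝ) i⌋₊ : ℝ)) = k * (p : Fin n → ℝ) i := by
      intro p i
      obtain ⟨m, hm⟩ := alphaSet_extreme_int n k hk α hα01 hα p p.2 i
      rw [hm, Nat.floor_natCast]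
  · intro p
    have hsum : ∑ i, ⌊(k : ℝ) * (p : Fin n → ℝ) i⌋₊ = k := by
      have : ((∑ i, ⌊(k : ℝ) * (p : Fin n → ℝ) i⌋₊ : ℕ) : ℝ) = (k : ℝ) := by
        push_cast
        rw [Finset.sum_congr rfl (fun i _ => hT p i), ← Finset.mul_sum, p.2.1.2, mul_one]
      exact_mod_cast this
    refine ⟨hsum, ?_⟩
    set s : Finset (Fin n) := Finset.univ.filter (fun i => ⌊(k : ℝ) * (p : Fin n → ℝ) i⌋₊ ≠ 0)
      with hs
    have hset : {i | ⌊(k : ℝ) * (p : Fin n → ℝ) i⌋₊ ≠ 0} = ↑s := by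
      ext i; simp [hs]
    rw [hset, Set.ncard_coe_finset]
    calc s.card = ∑ _i ∈ s, 1 := by simp
      _ ≤ ∑ i ∈ s, ⌊(k : ℝ) * (p : Fin n → ℝ) i⌋₊ := by
          apply Finset.sum_le_sum
          intro i hi
          have := (Finset.mem_filter.1 hi).2
          omega
      _ ≤ ∑ i, ⌊(k : ℝ) * (p : Fin n → ℝ) i⌋₊ :=
          Finset.sum_le_sum_of_subset (Finset.subset_univ s)
      _ = k := hsum
  · intro p q hpq
    apply Subtype.ext
    funext i
    have h1 := hT p i
    have h2 := hT q i
    have : ⌊(k : ℝ) * (p : Fin n → ℝ) i⌋₊ = ⌊(k : ℝ) * (q : Fin n → ℝ) i⌋₊ := congrFun hpq i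
    rw [this, h2] at h1
    have hk0 : (k : ℝ) ≠ 0 := by positivity
    exact mul_left_cancel₀ hk0 h1.symm
end

section
/- Let p ∈ ℝ^n with p_i > 0 for all i and Σ_{i=1}^n p_i = 1, let κ ∈ (0,1] with n·κ ≥ 1, and let p* be the (unique) minimizer of the Kullback–Leibler divergence D(q,p) = Σ_{i=1}^n q_i ln(q_i/p_i) over q ∈ S_{n,1/κ}. Set J = {i ∈ [n] : p*_i = κ}. Then for every i ∉ J, p*_i = ((1 − |J|·κ)/Σ_{j∉J} p_j) · p_i. -/
lemma core_log_ineq {x y : ℝ} (hx : 0 ≤ x) (hy : 0 < y) :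
    x - y ≤ x * Real.log (x / y) := by
  rcases eq_or_lt_of_le hx with h | h
  · rw [← h]; simpa using hy.le
  · have hlog := Real.log_le_sub_one_of_pos (show 0 < y / x by positivity)
    have hinv : Real.log (x / y) = - Real.log (y / x) := by
      rw [← Real.log_inv]
      congr 1
      field_simp
    have hxy : x * (y / x) = y := by field_simp
    nlinarith [mul_le_mul_of_nonneg_left hlog h.le]

lemma grad_log_ineq {c x y : ℝ} (hc : 0 < c) (hx : 0 ≤ x) (hy : 0 < y) :
    y * Real.log (y / c) + (x - y) * (Real.log (y / c) + 1) ≤ x * Real.log (x / c) := by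
  rcases eq_or_lt_of_le hx with h | h
  · have hL : (0:ℝ) * Real.log (0 / c) = 0 := by simp
    rw [← h, hL]; nlinarith
  · have hsplit : Real.log (x / c) = Real.log (x / y) + Real.log (y / c) := by
      have hxy : x / c = (x / y) * (y / c) := by field_simp
      rw [hxy, Real.log_mul (div_pos h hy).ne' (div_pos hy hc).ne']
    rw [hsplit]
    nlinarith [core_log_ineq hx hy]

set_option maxHeartbeats 1000000 in
/-- If `pstar` is the minimizer of the KL divergence `D(·, p)` over the capped simplex
`S_{n,1/κ}` and `J = {i | pstar i = κ}` is the set of capped coordinates, then every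
uncapped coordinate is proportional to the corresponding coordinate of `p`:
`pstar i = ((1 − |J|·κ) / Σ_{j∉J} p j) · p i` for all `i ∉ J`. -/
theorem KL_projection_uncapped_coords (n : ℕ)
    (p : Fin n → ℝ) (hp : ∀ i, 0 < p i) (hpsum : ∑ i, p i = 1)
    (κ : ℝ) (hκ0 : 0 < κ) (hκ1 : κ ≤ 1) (hnκ : 1 ≤ (n : ℝ) * κ)
    (S : Set (Fin n → ℝ))
    (hS : S = {q | (∀ i, 0 ≤ q i ∧ q i ≤ κ) ∧ ∑ i, q i = 1})
    (D : (Fin n → ℝ) → ℝ)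
    (hD : ∀ q, D q = ∑ i, q i * Real.log (q i / p i))
    (pstar : Fin n → ℝ) (hmem : pstar ∈ S) (hmin : ∀ q ∈ S, D pstar ≤ D q)
    (J : Finset (Fin n)) (hJ : ∀ i, i ∈ J ↔ pstar i = κ) :
    ∀ i, i ∉ J → pstar i = ((1 - (J.card : ℝ) * κ) / ∑ j ∈ Jᶜ, p j) * p i := by
  rw [hS] at hmem
  obtain ⟨hbd, hsum1⟩ := hmem
  -- exchange argument: cannot have pstar a / p a < pstar b / p b with a uncapped
  have hdec : ∀ a b : Fin n, a ≠ b → pstar a < κ →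
      ¬ (pstar a * p b < pstar b * p a) := by
    intro a b hab hacap hlt
    have hpa := hp a; have hpb := hp b
    have hb0 : 0 < pstar b := by nlinarith [(hbd a).1, (hbd b).1]
    set ε : ℝ := min (κ - pstar a) (min (pstar b / 2)
      ((pstar b * p a - pstar a * p b) / (2 * (p a + p b)))) with hεdef
    have hε0 : 0 < ε := by
      refine lt_min (by linarith) (lt_min (by linarith)
        (div_pos (by linarith) (by positivity)))
    have hε1 : ε ≤ κ - pstar a := min_le_left _ _
    have hε2 : ε ≤ pstar b / 2 := (min_le_right _ _).trans (min_le_left _ _)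
    have hε3 : ε ≤ (pstar b * p a - pstar a * p b) / (2 * (p a + p b)) :=
      (min_le_right _ _).trans (min_le_right _ _)
    have hε3' : ε * (2 * (p a + p b)) ≤ pstar b * p a - pstar a * p b :=
      (le_div_iff₀ (by positivity)).mp hε3
    have hratio : (pstar a + ε) * p b < (pstar b - ε) * p a := by nlinarith
    set q : Fin n → ℝ := fun k => if k = a then pstar a + ε
      else if k = b then pstar b - ε else pstar k with hq
    have hqa : q a = pstar a + ε := by simp [hq]
    have hqb : q b = pstar b - ε := by simp [hq, (Ne.symm hab)]
    have hqk : ∀ k, k ≠ a → k ≠ b → q k = pstar k := by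
      intro k h1 h2; simp [hq, h1, h2]
    have hqS : q ∈ S := by
      rw [hS]
      refine ⟨fun k => ?_, ?_⟩
      · by_cases h1 : k = a
        · subst h1
          rw [hqa]
          exact ⟨by nlinarith [(hbd k).1], by linarith⟩
        · by_cases h2 : k = b
          · subst h2
            rw [hqb]
            exact ⟨by linarith, by linarith [(hbd k).2]⟩
          · rw [hqk k h1 h2]; exact hbd k
      · have hrepr : ∀ k, q k = pstar k + (if k = a then ε else 0)
            - (if k = b then ε else 0) := by
          intro k
          by_cases h1 : k = a
          · subst h1
            simp [hqa, if_neg hab]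
          · by_cases h2 : k = b
            · subst h2
              simp [hqb, if_neg h1]
            · simp [hqk k h1 h2, if_neg h1, if_neg h2]
        rw [Finset.sum_congr rfl (fun k _ => hrepr k), Finset.sum_sub_distrib,
          Finset.sum_add_distrib, Finset.sum_ite_eq' Finset.univ a (fun _ => ε),
          Finset.sum_ite_eq' Finset.univ b (fun _ => ε)]
        simp [hsum1]
    have hdiff : D q - D pstar =
        (q a * Real.log (q a / p a) - pstar a * Real.log (pstar a / p a))
        + (q b * Real.log (q b / p b) - pstar b * Real.log (pstar b / p b)) := by
      rw [hD, hD, ← Finset.sum_sub_distrib]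
      exact Fintype.sum_eq_add a b hab
        (fun k hk => by rw [hqk k hk.1 hk.2]; ring)
    have hA : q a * Real.log (q a / p a) - pstar a * Real.log (pstar a / p a)
        ≤ ε * (Real.log ((pstar a + ε) / p a) + 1) := by
      have := grad_log_ineq hpa (hbd a).1 (show 0 < pstar a + ε by linarith [(hbd a).1])
      rw [hqa]; nlinarith [this]
    have hB : q b * Real.log (q b / p b) - pstar b * Real.log (pstar b / p b)
        ≤ - (ε * (Real.log ((pstar b - ε) / p b) + 1)) := by
      have := grad_log_ineq hpb (hbd b).1 (show 0 < pstar b - ε by linarith)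
      rw [hqb]; nlinarith [this]
    have hloglt : Real.log ((pstar a + ε) / p a) < Real.log ((pstar b - ε) / p b) := by
      apply Real.log_lt_log (div_pos (by linarith [(hbd a).1]) hpa)
      rw [div_lt_div_iff₀ hpa hpb]
      linarith [hratio]
    have hDlt : D q < D pstar := by nlinarith [hdiff, hA, hB]
    exact absurd (hmin q hqS) (not_le.mpr hDlt)
  intro i hi
  have hicap : pstar i < κ := lt_of_le_of_ne (hbd i).2 (fun h => hi ((hJ i).2 h))
  have hkey : ∀ j ∈ Jᶜ, pstar j * p i = pstar i * p j := by
    intro j hj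
    rw [Finset.mem_compl] at hj
    by_cases hij : j = i
    · subst hij; ring
    · have hjcap : pstar j < κ := lt_of_le_of_ne (hbd j).2 (fun h => hj ((hJ j).2 h))
      by_contra hne
      rcases lt_or_gt_of_ne hne with h | h
      · exact hdec j i hij hjcap h
      · exact hdec i j (Ne.symm hij) hicap h
  have hsum_c : ∑ j ∈ Jᶜ, pstar j = 1 - (J.card : ℝ) * κ := by
    have h1 : ∑ j ∈ J, pstar j = (J.card : ℝ) * κ := by
      rw [Finset.sum_congr rfl (fun j hj => (hJ j).1 hj), Finset.sum_const,
        nsmul_eq_mul]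
    have h2 : ∑ j ∈ J, pstar j + ∑ j ∈ Jᶜ, pstar j = 1 := by
      rw [Finset.sum_add_sum_compl]; exact hsum1
    linarith
  have hP : 0 < ∑ j ∈ Jᶜ, p j :=
    Finset.sum_pos (fun j _ => hp j) ⟨i, Finset.mem_compl.2 hi⟩
  have hmul : (1 - (J.card : ℝ) * κ) * p i = pstar i * ∑ j ∈ Jᶜ, p j := by
    rw [← hsum_c, Finset.sum_mul, Finset.mul_sum]
    exact Finset.sum_congr rfl (fun j hj => hkey j hj)
  field_simp
  linarith [hmul]
end

section
/- Let p ∈ ℝ^n with p_i > 0 for all i, Σ_{i=1}^n p_i = 1, and p_1 ≥ p_2 ≥ … ≥ p_n (sorted in non-increasing order); let κ ∈ (0,1] with n·κ ≥ 1, and let p* be the (unique) minimizer of the Kullback–Leibler divergence D(q,p) = Σ_{i=1}^n q_i ln(q_i/p_i) over q ∈ S_{n,1/κ}. Set J = {i ∈ [n] : p*_i = κ}. Then there exists r > 0 such that p* = (κ, …, κ, r·p_{|J|+1}, …, r·p_n), i.e., p*_i = κ for i ≤ |J| and p*_i = r·p_i for i > |J|. -/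
open Filter Set

private lemma aux_hasDerivAt (c : ℝ) (hc : c ≠ 0) {b : ℝ} (hb : b ≠ 0) :
    HasDerivAt (fun x => x * Real.log (x / c)) (Real.log b + 1 - Real.log c) b := by
  have h1 : HasDerivAt (fun x => x * Real.log x - x * Real.log c)
      (Real.log b + 1 - 1 * Real.log c) b :=
    (Real.hasDerivAt_mul_log hb).sub ((hasDerivAt_id b).mul_const _)
  rw [one_mul] at h1
  apply h1.congr_of_eventuallyEq
  filter_upwards [eventually_ne_nhds hb] with x hx
  rw [Real.log_div hx hc]; ring

private lemma aux_perturb {n : ℕ} (p : Fin n → ℝ) (κ : ℝ)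
    (D : (Fin n → ℝ) → ℝ)
    (hD : ∀ q, D q = ∑ i, q i * Real.log (q i / p i))
    (pstar : Fin n → ℝ)
    (hbd : ∀ i, 0 ≤ pstar i ∧ pstar i ≤ κ) (hsum : ∑ i, pstar i = 1)
    (hmin : ∀ q, (∀ i, 0 ≤ q i ∧ q i ≤ κ) ∧ ∑ i, q i = 1 → D pstar ≤ D q)
    (i j : Fin n) (hij : i ≠ j) (ε : ℝ) (hε : 0 < ε)
    (h1 : pstar i + ε ≤ κ) (h2 : ε ≤ pstar j) :
    0 ≤ ((pstar i + ε) * Real.log ((pstar i + ε) / p i)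
          - pstar i * Real.log (pstar i / p i))
        + ((pstar j - ε) * Real.log ((pstar j - ε) / p j)
          - pstar j * Real.log (pstar j / p j)) := by
  set q : Fin n → ℝ :=
    Function.update (Function.update pstar i (pstar i + ε)) j (pstar j - ε) with hqdef
  have hqi : q i = pstar i + ε := by
    rw [hqdef, Function.update_of_ne hij, Function.update_self]
  have hqj : q j = pstar j - ε := by rw [hqdef, Function.update_self]
  have hqk : ∀ k, k ≠ i → k ≠ j → q k = pstar k := fun k hki hkj => by
    rw [hqdef, Function.update_of_ne hkj, Function.update_of_ne hki]
  have hsplit : ∀ k, q k = pstar k + ((if k = i then ε else 0) - (if k = j then ε else 0)) := by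
    intro k
    by_cases hki : k = i
    · subst hki; simp [hqi, hij]
    · by_cases hkj : k = j
      · subst hkj; simp [hqj, hki]; ring
      · simp [hqk k hki hkj, hki, hkj]
  have hqS : (∀ k, 0 ≤ q k ∧ q k ≤ κ) ∧ ∑ k, q k = 1 := by
    constructor
    · intro k
      by_cases hki : k = i
      · subst hki
        rw [hqi]
        exact ⟨by linarith [(hbd k).1], h1⟩
      · by_cases hkj : k = j
        · subst hkj
          rw [hqj]
          exact ⟨by linarith, by linarith [(hbd k).2]⟩
        · rw [hqk k hki hkj]; exact hbd k
    · calc ∑ k, q k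
          = ∑ k, (pstar k + ((if k = i then ε else 0) - (if k = j then ε else 0))) :=
            Finset.sum_congr rfl fun k _ => hsplit k
        _ = 1 := by
            rw [Finset.sum_add_distrib, Finset.sum_sub_distrib,
              Finset.sum_ite_eq' Finset.univ i, Finset.sum_ite_eq' Finset.univ j]
            simp [hsum]
  have hle := hmin q hqS
  rw [hD, hD] at hle
  set f : Fin n → ℝ :=
    fun k => q k * Real.log (q k / p k) - pstar k * Real.log (pstar k / p k) with hfdef
  have hzero : ∀ k ∈ Finset.univ, k ∉ ({i, j} : Finset (Fin n)) → f k = 0 := by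
    intro k _ hk
    simp only [Finset.mem_insert, Finset.mem_singleton] at hk
    push_neg at hk
    rw [hfdef]
    simp [hqk k hk.1 hk.2]
  have hsubset : ∑ k ∈ ({i, j} : Finset (Fin n)), f k = ∑ k, f k :=
    Finset.sum_subset (Finset.subset_univ _) hzero
  have hpair : ∑ k ∈ ({i, j} : Finset (Fin n)), f k
      = ((pstar i + ε) * Real.log ((pstar i + ε) / p i)
          - pstar i * Real.log (pstar i / p i))
        + ((pstar j - ε) * Real.log ((pstar j - ε) / p j)
          - pstar j * Real.log (pstar j / p j)) := by
    rw [Finset.sum_pair hij, hfdef]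
    simp only [hqi, hqj]
  have hsumf : ∑ k, f k
      = (∑ k, q k * Real.log (q k / p k)) - ∑ k, pstar k * Real.log (pstar k / p k) := by
    rw [hfdef, Finset.sum_sub_distrib]
  rw [← hpair, hsubset, hsumf]
  linarith

private lemma aux_pos {n : ℕ} (p : Fin n → ℝ) (hp : ∀ i, 0 < p i) (κ : ℝ) (hκ0 : 0 < κ)
    (D : (Fin n → ℝ) → ℝ)
    (hD : ∀ q, D q = ∑ i, q i * Real.log (q i / p i))
    (pstar : Fin n → ℝ)
    (hbd : ∀ i, 0 ≤ pstar i ∧ pstar i ≤ κ) (hsum : ∑ i, pstar i = 1)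
    (hmin : ∀ q, (∀ i, 0 ≤ q i ∧ q i ≤ κ) ∧ ∑ i, q i = 1 → D pstar ≤ D q) :
    ∀ i, 0 < pstar i := by
  intro i
  rcases (hbd i).1.lt_or_eq with h | h
  · exact h
  exfalso
  have hpi0 : pstar i = 0 := h.symm
  obtain ⟨j, hj⟩ : ∃ j, 0 < pstar j := by
    by_contra hcon
    push_neg at hcon
    have : ∑ k, pstar k = 0 :=
      Finset.sum_eq_zero fun k _ => le_antisymm (hcon k) (hbd k).1
    rw [hsum] at this; norm_num at this
  have hij : i ≠ j := by
    intro hEq; rw [hEq] at hpi0; rw [hpi0] at hj; exact lt_irrefl _ hj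
  have hb : pstar j = pstar j := rfl
  set b : ℝ := pstar j with hbdef
  set f : ℝ → ℝ := fun ε => (b - ε) * Real.log ((b - ε) / p j) with hfdef
  have hf : HasDerivAt f ((Real.log b + 1 - Real.log (p j)) * (-1)) 0 := by
    have hg : HasDerivAt (fun x => x * Real.log (x / p j))
        (Real.log b + 1 - Real.log (p j)) ((fun ε : ℝ => b - ε) 0) := by
      simpa using aux_hasDerivAt (p j) (hp j).ne' hj.ne'
    have hlin : HasDerivAt (fun ε : ℝ => b - ε) (-1) 0 := by
      simpa using (hasDerivAt_id (0:ℝ)).const_sub b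
    exact hg.comp 0 hlin
  have hslope : Tendsto (fun ε => (f ε - f 0) / ε) (nhdsWithin 0 (Ioi 0))
      (nhds ((Real.log b + 1 - Real.log (p j)) * (-1))) := by
    have h2 := (hasDerivAt_iff_tendsto_slope.mp hf).mono_left
      (nhdsWithin_mono 0 (fun x hx => ne_of_gt hx))
    refine h2.congr fun ε => ?_
    rw [slope_def_field, sub_zero]
  have hlog : Tendsto (fun ε : ℝ => Real.log ε - Real.log (p i)) (nhdsWithin 0 (Ioi 0)) atBot := by
    simpa [sub_eq_add_neg] using
      tendsto_atBot_add_const_right _ (-Real.log (p i)) Real.tendsto_log_nhdsGT_zero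
  set F : ℝ → ℝ := fun ε => (f ε - f 0) / ε + (Real.log ε - Real.log (p i)) with hFdef
  have hF : Tendsto F (nhdsWithin 0 (Ioi 0)) atBot := hslope.add_atBot hlog
  have hev : ∀ᶠ ε in nhdsWithin 0 (Ioi 0), 0 ≤ F ε := by
    filter_upwards [Ioo_mem_nhdsGT_of_mem
      (Set.mem_Ico.mpr ⟨le_refl (0:ℝ), lt_min hκ0 hj⟩)] with ε hε
    obtain ⟨hε0, hεlt⟩ := hε
    obtain ⟨hεκ', hεb'⟩ := lt_min_iff.mp hεlt
    have hεκ : pstar i + ε ≤ κ := by rw [hpi0]; linarith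
    have hper := aux_perturb p κ D hD pstar hbd hsum hmin i j hij ε hε0 hεκ hεb'.le
    rw [hpi0] at hper
    simp only [zero_add, zero_mul, sub_zero] at hper
    have hlogdiv : Real.log (ε / p i) = Real.log ε - Real.log (p i) :=
      Real.log_div hε0.ne' (hp i).ne'
    rw [hlogdiv] at hper
    have hFε : F ε = (ε * (Real.log ε - Real.log (p i)) + (f ε - f 0)) / ε := by
      rw [hFdef]
      field_simp
      ring
    rw [hFε]
    apply div_nonneg _ hε0.le
    have hfε : f ε = (pstar j - ε) * Real.log ((pstar j - ε) / p j) := rfl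
    have hf0 : f 0 = pstar j * Real.log (pstar j / p j) := by
      rw [hfdef]; simp [hbdef]
    rw [hfε, hf0]
    linarith
  have hlt := hF.eventually (eventually_lt_atBot (0:ℝ))
  obtain ⟨ε, hpos, hneg⟩ := (hev.and hlt).exists
  linarith

private lemma aux_foc {n : ℕ} (p : Fin n → ℝ) (hp : ∀ i, 0 < p i) (κ : ℝ)
    (D : (Fin n → ℝ) → ℝ)
    (hD : ∀ q, D q = ∑ i, q i * Real.log (q i / p i))
    (pstar : Fin n → ℝ)
    (hbd : ∀ i, 0 ≤ pstar i ∧ pstar i ≤ κ) (hsum : ∑ i, pstar i = 1)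
    (hmin : ∀ q, (∀ i, 0 ≤ q i ∧ q i ≤ κ) ∧ ∑ i, q i = 1 → D pstar ≤ D q)
    (i j : Fin n) (hij : i ≠ j) (hiκ : pstar i < κ)
    (hi : 0 < pstar i) (hj : 0 < pstar j) :
    Real.log (pstar j) - Real.log (p j) ≤ Real.log (pstar i) - Real.log (p i) := by
  set a := pstar i with ha
  set b := pstar j with hb
  set f1 : ℝ → ℝ := fun ε => (a + ε) * Real.log ((a + ε) / p i) with hf1def
  set f2 : ℝ → ℝ := fun ε => (b - ε) * Real.log ((b - ε) / p j) with hf2def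
  have hd1 : HasDerivAt f1 ((Real.log a + 1 - Real.log (p i)) * 1) 0 := by
    have hg : HasDerivAt (fun x => x * Real.log (x / p i))
        (Real.log a + 1 - Real.log (p i)) ((fun ε : ℝ => a + ε) 0) := by
      simpa using aux_hasDerivAt (p i) (hp i).ne' hi.ne'
    have hlin : HasDerivAt (fun ε : ℝ => a + ε) 1 0 := by
      simpa using (hasDerivAt_id (0:ℝ)).const_add a
    exact hg.comp 0 hlin
  have hd2 : HasDerivAt f2 ((Real.log b + 1 - Real.log (p j)) * (-1)) 0 := by
    have hg : HasDerivAt (fun x => x * Real.log (x / p j))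
        (Real.log b + 1 - Real.log (p j)) ((fun ε : ℝ => b - ε) 0) := by
      simpa using aux_hasDerivAt (p j) (hp j).ne' hj.ne'
    have hlin : HasDerivAt (fun ε : ℝ => b - ε) (-1) 0 := by
      simpa using (hasDerivAt_id (0:ℝ)).const_sub b
    exact hg.comp 0 hlin
  have hslope1 : Tendsto (fun ε => (f1 ε - f1 0) / ε) (nhdsWithin 0 (Ioi 0))
      (nhds ((Real.log a + 1 - Real.log (p i)) * 1)) := by
    have h2 := (hasDerivAt_iff_tendsto_slope.mp hd1).mono_left
      (nhdsWithin_mono 0 (fun x hx => ne_of_gt hx))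
    refine h2.congr fun ε => ?_
    rw [slope_def_field, sub_zero]
  have hslope2 : Tendsto (fun ε => (f2 ε - f2 0) / ε) (nhdsWithin 0 (Ioi 0))
      (nhds ((Real.log b + 1 - Real.log (p j)) * (-1))) := by
    have h2 := (hasDerivAt_iff_tendsto_slope.mp hd2).mono_left
      (nhdsWithin_mono 0 (fun x hx => ne_of_gt hx))
    refine h2.congr fun ε => ?_
    rw [slope_def_field, sub_zero]
  have hsum' : Tendsto (fun ε => (f1 ε - f1 0) / ε + (f2 ε - f2 0) / ε)
      (nhdsWithin 0 (Ioi 0))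
      (nhds ((Real.log a + 1 - Real.log (p i)) * 1
        + (Real.log b + 1 - Real.log (p j)) * (-1))) := hslope1.add hslope2
  have hev : ∀ᶠ ε in nhdsWithin 0 (Ioi 0),
      0 ≤ (f1 ε - f1 0) / ε + (f2 ε - f2 0) / ε := by
    filter_upwards [Ioo_mem_nhdsGT_of_mem
      (Set.mem_Ico.mpr ⟨le_refl (0:ℝ), lt_min (by linarith : (0:ℝ) < κ - a) hj⟩)] with ε hε
    obtain ⟨hε0, hεlt⟩ := hε
    obtain ⟨hεκ', hεb'⟩ := lt_min_iff.mp hεlt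
    have hper := aux_perturb p κ D hD pstar hbd hsum hmin i j hij ε hε0
      (by linarith) hεb'.le
    have hf10 : f1 0 = a * Real.log (a / p i) := by rw [hf1def]; simp
    have hf20 : f2 0 = b * Real.log (b / p j) := by rw [hf2def]; simp
    rw [← add_div]
    apply div_nonneg _ hε0.le
    rw [hf10, hf20, hf1def, hf2def]
    simp only []
    linarith [hper]
  have hge := ge_of_tendsto hsum' hev
  linarith

/-- If `p` is a strictly positive probability vector sorted in non-increasing order and
`pstar` is the minimizer of the KL divergence `D(·, p)` over the capped simplex
`S_{n,1/κ}` with capped set `J = {i | pstar i = κ}`, then there exists `r > 0` such that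
`pstar = (κ, …, κ, r·p_{|J|+1}, …, r·p_n)`: the first `|J|` coordinates equal `κ` and
the remaining ones equal `r · p i`. -/
theorem KL_projection_caps_largest_coords (n : ℕ)
    (p : Fin n → ℝ) (hp : ∀ i, 0 < p i) (hpsum : ∑ i, p i = 1)
    (hmono : ∀ i j : Fin n, i ≤ j → p j ≤ p i)
    (κ : ℝ) (hκ0 : 0 < κ) (hκ1 : κ ≤ 1) (hnκ : 1 ≤ (n : ℝ) * κ)
    (S : Set (Fin n → ℝ))
    (hS : S = {q | (∀ i, 0 ≤ q i ∧ q i ≤ κ) ∧ ∑ i, q i = 1})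
    (D : (Fin n → ℝ) → ℝ)
    (hD : ∀ q, D q = ∑ i, q i * Real.log (q i / p i))
    (pstar : Fin n → ℝ) (hmem : pstar ∈ S) (hmin : ∀ q ∈ S, D pstar ≤ D q)
    (J : Finset (Fin n)) (hJ : ∀ i, i ∈ J ↔ pstar i = κ) :
    ∃ r : ℝ, 0 < r ∧
      (∀ i : Fin n, (i : ℕ) < J.card → pstar i = κ) ∧
      (∀ i : Fin n, J.card ≤ (i : ℕ) → pstar i = r * p i) := by
  subst hS
  obtain ⟨hbd, hsum⟩ := hmem
  have hmin' : ∀ q, (∀ i, 0 ≤ q i ∧ q i ≤ κ) ∧ ∑ i, q i = 1 → D pstar ≤ D q :=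
    fun q hq => hmin q hq
  have hpos : ∀ i, 0 < pstar i := aux_pos p hp κ hκ0 D hD pstar hbd hsum hmin'
  have hkey : ∀ i j : Fin n, i ≠ j → pstar i < κ →
      Real.log (pstar j) - Real.log (p j) ≤ Real.log (pstar i) - Real.log (p i) :=
    fun i j hij hiκ => aux_foc p hp κ D hD pstar hbd hsum hmin' i j hij hiκ
      (hpos i) (hpos j)
  -- downward closure of J
  have hdc : ∀ i j : Fin n, i ≤ j → j ∈ J → i ∈ J := by
    intro i j hle hjJ
    rw [hJ] at hjJ ⊢
    by_contra hne
    have hiκ : pstar i < κ := lt_of_le_of_ne (hbd i).2 hne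
    have hij : i ≠ j := fun h => hne (h ▸ hjJ)
    have hk := hkey i j hij hiκ
    rw [hjJ] at hk
    have hpj : p j ≤ p i := hmono i j hle
    have hlogp : Real.log (p j) ≤ Real.log (p i) := Real.log_le_log (hp j) hpj
    have hlogκ : Real.log κ ≤ Real.log (pstar i) := by linarith
    have : κ ≤ pstar i := (Real.log_le_log_iff hκ0 (hpos i)).mp hlogκ
    linarith
  -- J consists exactly of the first J.card indices
  have hcard : ∀ i : Fin n, i ∈ J ↔ (i : ℕ) < J.card := by
    intro i
    constructor
    · intro hiJ
      by_contra hlt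
      push_neg at hlt
      have hsub : Finset.Iic i ⊆ J := fun j hj =>
        hdc j i (Finset.mem_Iic.mp hj) hiJ
      have := Finset.card_le_card hsub
      rw [Fin.card_Iic] at this
      omega
    · intro hlt
      by_contra hiJ
      have hsub : J ⊆ Finset.Iio i := by
        intro j hj
        rw [Finset.mem_Iio]
        by_contra hji
        push_neg at hji
        exact hiJ (hdc i j hji hj)
      have := Finset.card_le_card hsub
      rw [Fin.card_Iio] at this
      omega
  have hfirst : ∀ i : Fin n, (i : ℕ) < J.card → pstar i = κ :=
    fun i h => (hJ i).1 ((hcard i).2 h)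
  by_cases hJu : J.card = n
  · refine ⟨1, one_pos, hfirst, ?_⟩
    intro i hi
    have := i.isLt
    omega
  · obtain ⟨i0, hi0⟩ : ∃ i0 : Fin n, i0 ∉ J := by
      by_contra hcon
      push_neg at hcon
      have : J = Finset.univ := Finset.eq_univ_iff_forall.mpr hcon
      rw [this, Finset.card_univ, Fintype.card_fin] at hJu
      exact hJu rfl
    refine ⟨pstar i0 / p i0, div_pos (hpos i0) (hp i0), hfirst, ?_⟩
    intro i hi
    have hiJ : i ∉ J := fun h => absurd ((hcard i).1 h) (not_lt.mpr hi)
    have hiκ : pstar i < κ := lt_of_le_of_ne (hbd i).2 (fun h => hiJ ((hJ i).2 h))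
    have hi0κ : pstar i0 < κ := lt_of_le_of_ne (hbd i0).2 (fun h => hi0 ((hJ i0).2 h))
    by_cases heq : i = i0
    · subst heq
      exact (div_mul_cancel₀ _ (hp i).ne').symm
    · have e1 := hkey i i0 heq hiκ
      have e2 := hkey i0 i (Ne.symm heq) hi0κ
      have hlogeq : Real.log (pstar i0) - Real.log (p i0)
          = Real.log (pstar i) - Real.log (p i) := le_antisymm e1 e2
      have hlogdiv : Real.log (pstar i / p i) = Real.log (pstar i0 / p i0) := by
        rw [Real.log_div (hpos i).ne' (hp i).ne', Real.log_div (hpos i0).ne' (hp i0).ne']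
        linarith
      have hdiv : pstar i / p i = pstar i0 / p i0 := by
        have := congrArg Real.exp hlogdiv
        rwa [Real.exp_log (div_pos (hpos i) (hp i)),
          Real.exp_log (div_pos (hpos i0) (hp i0))] at this
      rw [← hdiv]
      exact (div_mul_cancel₀ _ (hp i).ne').symm
end

section
/- Let p ∈ ℝ^n with p_i > 0 for all i, Σ_{i=1}^n p_i = 1 and p_1 ≥ p_2 ≥ … ≥ p_n, and let κ ∈ (0,1]. Let m ∈ [n] be such that r_0 = (1 − m·κ)/(1 − Σ_{i=1}^m p_i) > 0 and r_1 = (1 − (m+1)·κ)/(1 − Σ_{i=1}^{m+1} p_i) > 0, and consider the probability vectors v' = (κ, …, κ, r_0·p_{m+1}, …, r_0·p_n) (with m entries equal to κ) and v'' = (κ, …, κ, r_1·p_{m+2}, …, r_1·p_n) (with m+1 entries equal to κ). Then D(v', p) ≤ D(v'', p), where D(q,p) = Σ_{i=1}^n q_i ln(q_i/p_i) denotes the Kullback–Leibler divergence. -/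
private lemma log_sum_two (a b c d : ℝ) (ha : 0 < a) (hb : 0 < b) (hc : 0 < c) (hd : 0 < d) :
    (a + b) * Real.log ((a + b) / (c + d)) ≤
      a * Real.log (a / c) + b * Real.log (b / d) := by
  have hs : 0 < a + b := by linarith
  have ht : 0 < c + d := by linarith
  have h1 : Real.log ((a + b) / (c + d)) - Real.log (a / c) ≤ (a + b) * c / ((c + d) * a) - 1 := by
    have := Real.log_le_sub_one_of_pos (show 0 < ((a + b) / (c + d)) / (a / c) by positivity)
    rw [Real.log_div (by positivity) (by positivity)] at this
    calc Real.log ((a + b) / (c + d)) - Real.log (a / c)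
        ≤ ((a + b) / (c + d)) / (a / c) - 1 := this
      _ = (a + b) * c / ((c + d) * a) - 1 := by field_simp
  have h2 : Real.log ((a + b) / (c + d)) - Real.log (b / d) ≤ (a + b) * d / ((c + d) * b) - 1 := by
    have := Real.log_le_sub_one_of_pos (show 0 < ((a + b) / (c + d)) / (b / d) by positivity)
    rw [Real.log_div (by positivity) (by positivity)] at this
    calc Real.log ((a + b) / (c + d)) - Real.log (b / d)
        ≤ ((a + b) / (c + d)) / (b / d) - 1 := this
      _ = (a + b) * d / ((c + d) * b) - 1 := by field_simp
  have h1' : a * Real.log ((a + b) / (c + d)) - a * Real.log (a / c) ≤ (a + b) * c / (c + d) - a := by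
    have := mul_le_mul_of_nonneg_left h1 ha.le
    calc a * Real.log ((a + b) / (c + d)) - a * Real.log (a / c)
        = a * (Real.log ((a + b) / (c + d)) - Real.log (a / c)) := by ring
      _ ≤ a * ((a + b) * c / ((c + d) * a) - 1) := this
      _ = (a + b) * c / (c + d) - a := by field_simp
  have h2' : b * Real.log ((a + b) / (c + d)) - b * Real.log (b / d) ≤ (a + b) * d / (c + d) - b := by
    have := mul_le_mul_of_nonneg_left h2 hb.le
    calc b * Real.log ((a + b) / (c + d)) - b * Real.log (b / d)
        = b * (Real.log ((a + b) / (c + d)) - Real.log (b / d)) := by ring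
      _ ≤ b * ((a + b) * d / ((c + d) * b) - 1) := this
      _ = (a + b) * d / (c + d) - b := by field_simp
  have hz : (a + b) * c / (c + d) - a + ((a + b) * d / (c + d) - b) = 0 := by
    field_simp
    ring
  linarith


/-- For a strictly positive, non-increasing probability vector `p` and `κ ∈ (0,1]`:
if capping the first `m` and the first `m+1` coordinates both give feasible rescalings
(`r₀ > 0` and `r₁ > 0`), then capping fewer coordinates gives a smaller KL divergence:
`D(v', p) ≤ D(v'', p)`, where `v'` caps `m` coordinates and `v''` caps `m+1`. -/
theorem KL_capping_monotone (n : ℕ)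
    (p : Fin n → ℝ) (hp : ∀ i, 0 < p i) (hpsum : ∑ i, p i = 1)
    (hmono : ∀ i j : Fin n, i ≤ j → p j ≤ p i)
    (κ : ℝ) (hκ0 : 0 < κ) (hκ1 : κ ≤ 1)
    (m : ℕ) (hm1 : 1 ≤ m) (hmn : m + 1 ≤ n)
    (r₀ r₁ : ℝ)
    (hr₀ : r₀ = (1 - (m : ℝ) * κ) /
      (1 - ∑ i ∈ Finset.univ.filter (fun i : Fin n => (i : ℕ) < m), p i))
    (hr₁ : r₁ = (1 - ((m : ℝ) + 1) * κ) /
      (1 - ∑ i ∈ Finset.univ.filter (fun i : Fin n => (i : ℕ) < m + 1), p i))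
    (hr₀pos : 0 < r₀) (hr₁pos : 0 < r₁)
    (v' v'' : Fin n → ℝ)
    (hv' : ∀ i : Fin n, v' i = if (i : ℕ) < m then κ else r₀ * p i)
    (hv'' : ∀ i : Fin n, v'' i = if (i : ℕ) < m + 1 then κ else r₁ * p i)
    (D : (Fin n → ℝ) → ℝ)
    (hD : ∀ q, D q = ∑ i, q i * Real.log (q i / p i)) :
    D v' ≤ D v'' := by
  classical
  set im : Fin n := ⟨m, by omega⟩ with him_def
  set F := Finset.univ.filter (fun i : Fin n => (i : ℕ) < m) with hF
  set G := Finset.univ.filter (fun i : Fin n => (i : ℕ) < m + 1) with hG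
  set F' := Finset.univ.filter (fun i : Fin n => ¬ (i : ℕ) < m) with hF'
  set G' := Finset.univ.filter (fun i : Fin n => ¬ (i : ℕ) < m + 1) with hG'
  have himF : im ∉ F := by simp [hF, him_def]
  have himG' : im ∉ G' := by simp [hG', him_def]
  have hGins : G = insert im F := by
    ext i
    simp only [hG, hF, Finset.mem_filter, Finset.mem_univ, true_and, Finset.mem_insert]
    constructor
    · intro h
      rcases Nat.lt_succ_iff_lt_or_eq.mp h with h | h
      · exact Or.inr h
      · exact Or.inl (Fin.ext h)
    · rintro (rfl | h)
      · exact Nat.lt_succ_self m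
      · omega
  have hF'ins : F' = insert im G' := by
    ext i
    simp only [hF', hG', Finset.mem_filter, Finset.mem_univ, true_and, Finset.mem_insert]
    constructor
    · intro h
      by_cases h' : (i : ℕ) = m
      · exact Or.inl (Fin.ext h')
      · exact Or.inr (by omega)
    · rintro (rfl | h)
      · exact lt_irrefl m
      · omega
  set T := ∑ i ∈ F', p i with hT
  set T' := ∑ i ∈ G', p i with hT'
  have hTT' : T = p im + T' := by rw [hT, hF'ins, Finset.sum_insert himG']
  have hT'nonneg : 0 ≤ T' := Finset.sum_nonneg fun i _ => (hp i).le
  have hTsplit : (∑ i ∈ F, p i) + T = 1 := by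
    rw [hT, hF, hF', Finset.sum_filter_add_sum_filter_not, hpsum]
  have hGsplit : (∑ i ∈ G, p i) + T' = 1 := by
    rw [hT', hG, hG', Finset.sum_filter_add_sum_filter_not, hpsum]
  have hTeq : 1 - ∑ i ∈ F, p i = T := by linarith
  have hT'eq : 1 - ∑ i ∈ G, p i = T' := by linarith
  rw [hTeq] at hr₀
  rw [hT'eq] at hr₁
  have hTpos : 0 < T := by
    rw [hTT']; have := hp im; linarith
  have hT'pos : 0 < T' := by
    rcases hT'nonneg.lt_or_eq with h | h
    · exact h
    · exfalso; rw [hr₁, ← h, div_zero] at hr₁pos; exact lt_irrefl 0 hr₁pos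
  set a := 1 - (m : ℝ) * κ with ha_def
  set b := 1 - ((m : ℝ) + 1) * κ with hb_def
  have ha : a = r₀ * T := by rw [hr₀]; field_simp
  have hb : b = r₁ * T' := by rw [hr₁]; field_simp
  have hapos : 0 < a := by rw [ha]; positivity
  have hbpos : 0 < b := by rw [hb]; positivity
  have hab : a = κ + b := by rw [ha_def, hb_def]; ring
  -- compute D v'
  have hDv' : D v' = (∑ i ∈ F, κ * Real.log (κ / p i)) + a * Real.log (a / T) := by
    rw [hD, ← Finset.sum_filter_add_sum_filter_not Finset.univ
      (fun i : Fin n => (i : ℕ) < m) (fun i => v' i * Real.log (v' i / p i))]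
    congr 1
    · refine Finset.sum_congr rfl fun i hi => ?_
      rw [hv' i, if_pos (by simpa [hF] using hi)]
    · rw [show (a * Real.log (a / T)) = ∑ i ∈ F', r₀ * Real.log r₀ * p i by
        rw [← Finset.mul_sum, ← hT, ← hr₀, ha]; ring]
      refine Finset.sum_congr rfl fun i hi => ?_
      have hi' : ¬ (i : ℕ) < m := by simpa [hF'] using hi
      rw [hv' i, if_neg hi', mul_div_assoc, div_self (hp i).ne', mul_one]
      ring
  have hDv'' : D v'' = (∑ i ∈ F, κ * Real.log (κ / p i)) + κ * Real.log (κ / p im)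
      + b * Real.log (b / T') := by
    rw [hD, ← Finset.sum_filter_add_sum_filter_not Finset.univ
      (fun i : Fin n => (i : ℕ) < m + 1) (fun i => v'' i * Real.log (v'' i / p i))]
    congr 1
    · rw [show ((∑ i ∈ F, κ * Real.log (κ / p i)) + κ * Real.log (κ / p im))
        = ∑ i ∈ G, κ * Real.log (κ / p i) by
          rw [hGins, Finset.sum_insert himF]; ring]
      refine Finset.sum_congr rfl fun i hi => ?_
      rw [hv'' i, if_pos (by simpa [hG] using hi)]
    · rw [show (b * Real.log (b / T')) = ∑ i ∈ G', r₁ * Real.log r₁ * p i by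
        rw [← Finset.mul_sum, ← hT', ← hr₁, hb]; ring]
      refine Finset.sum_congr rfl fun i hi => ?_
      have hi' : ¬ (i : ℕ) < m + 1 := by simpa [hG'] using hi
      rw [hv'' i, if_neg hi', mul_div_assoc, div_self (hp i).ne', mul_one]
      ring
  have key := log_sum_two κ b (p im) T' hκ0 hbpos (hp im) hT'pos
  rw [← hab, ← hTT'] at key
  rw [hDv', hDv'']
  linarith
end

section
/- Let v ∈ ℝ^n with v_i > 0 for all i and Σ_{i=1}^n v_i = 1, and let κ satisfy 1/n ≤ κ ≤ 1. Then there exists α > 0 such that α / ( Σ_{i : v_i ≥ α} α + Σ_{i : v_i < α} v_i ) = κ, i.e., α = κ·( |{i : v_i ≥ α}|·α + Σ_{i : v_i < α} v_i ). -/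
/-- Existence of the capping threshold `α`: for a strictly positive probability vector
`v` and `1/n ≤ κ ≤ 1`, there exists `α > 0` with
`α / ( Σ_{i : v i ≥ α} α + Σ_{i : v i < α} v i ) = κ`, i.e.
`α = κ · ( |{i : v i ≥ α}| · α + Σ_{i : v i < α} v i )`. -/
theorem exists_capping_threshold (n : ℕ)
    (v : Fin n → ℝ) (hv : ∀ i, 0 < v i) (hvsum : ∑ i, v i = 1)
    (κ : ℝ) (hκn : 1 / (n : ℝ) ≤ κ) (hκ1 : κ ≤ 1) :
    ∃ α : ℝ, 0 < α ∧
      α = κ * ((Finset.univ.filter (fun i : Fin n => α ≤ v i)).card * α +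
        ∑ i ∈ Finset.univ.filter (fun i : Fin n => v i < α), v i) := by
  have hn : 0 < n := by
    rcases Nat.eq_zero_or_pos n with h | h
    · subst h; simp at hvsum
    · exact h
  have hn' : (0 : ℝ) < n := by exact_mod_cast hn
  obtain ⟨j, -, hj⟩ := Finset.exists_min_image Finset.univ v
    ⟨⟨0, hn⟩, Finset.mem_univ _⟩
  have hj' : ∀ i, v j ≤ v i := fun i => hj i (Finset.mem_univ i)
  set g : ℝ → ℝ := fun α => κ * (∑ i, min α (v i)) - α with hg
  have hgc : Continuous g := by
    apply Continuous.sub _ continuous_id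
    exact continuous_const.mul
      (continuous_finset_sum _ fun i _ => continuous_id.min continuous_const)
  have hκpos : 0 < κ := lt_of_lt_of_le (by positivity) hκn
  have hκn' : 1 ≤ κ * n := (div_le_iff₀ hn').mp hκn
  have hvj1 : v j ≤ 1 := by
    rw [← hvsum]
    exact Finset.single_le_sum (fun i _ => (hv i).le) (Finset.mem_univ j)
  have hga : 0 ≤ g (v j) := by
    have : ∑ i, min (v j) (v i) = n * v j := by
      rw [Finset.sum_congr rfl fun i _ => min_eq_left (hj' i)]
      simp [mul_comm]
    simp only [hg, this]
    nlinarith [hv j]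
  have hgb : g 2 ≤ 0 := by
    have hs : ∑ i, min (2 : ℝ) (v i) ≤ 1 := by
      rw [← hvsum]
      exact Finset.sum_le_sum fun i _ => min_le_right _ _
    have : κ * (∑ i, min (2 : ℝ) (v i)) ≤ κ := by
      nlinarith
    simp only [hg]
    linarith
  have hab : v j ≤ 2 := by linarith
  obtain ⟨α, hαmem, hα0⟩ := intermediate_value_Icc' hab hgc.continuousOn
    (Set.mem_Icc.mpr ⟨hgb, hga⟩)
  refine ⟨α, lt_of_lt_of_le (hv j) hαmem.1, ?_⟩
  have hsplit : ∑ i, min α (v i) =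
      ((Finset.univ.filter (fun i : Fin n => α ≤ v i)).card : ℝ) * α +
        ∑ i ∈ Finset.univ.filter (fun i : Fin n => v i < α), v i := by
    rw [← Finset.sum_filter_add_sum_filter_not Finset.univ (fun i => α ≤ v i)]
    congr 1
    · rw [Finset.sum_congr rfl fun i hi => min_eq_left (Finset.mem_filter.mp hi).2]
      simp [mul_comm]
    · rw [show (Finset.univ.filter fun i : Fin n => ¬ α ≤ v i)
            = Finset.univ.filter fun i : Fin n => v i < α from by
          simp [not_le]]
      exact Finset.sum_congr rfl fun i hi =>
        min_eq_right (Finset.mem_filter.mp hi).2.le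
  have : κ * (∑ i, min α (v i)) - α = 0 := hα0
  rw [hsplit] at this
  linarith
end

section
/- Let 1 ≤ k ≤ n and let H(u) = −Σ_{i=1}^n u_i ln u_i (with 0·ln 0 = 0) denote the Shannon entropy. Then for every u ∈ S_{n,k} one has ln k ≤ H(u) ≤ ln n; moreover the lower bound is attained by the vector u* with u*_i = 1/k for i ≤ k and u*_i = 0 for i > k, and the upper bound is attained by the uniform distribution u_i = 1/n for all i (which lies in S_{n,k}). -/
open Finset

lemma sum_ite_lt_fin (n k : ℕ) (hkn : k ≤ n) (c : ℝ) :
    (∑ i : Fin n, if (i : ℕ) < k then c else 0) = k * c := by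
  rw [Fin.sum_univ_eq_sum_range (fun i => if i < k then c else 0)]
  rw [← Finset.sum_filter]
  have : (Finset.range n).filter (· < k) = Finset.range k := by
    ext i
    simp only [Finset.mem_filter, Finset.mem_range]
    constructor
    · rintro ⟨_, h⟩; exact h
    · intro h; exact ⟨lt_of_lt_of_le h hkn, h⟩
  rw [this, Finset.sum_const, Finset.card_range, nsmul_eq_mul]

/-- On the `k`-set `S_{n,k}`, the Shannon entropy `H(u) = −Σ u_i ln u_i` satisfies
`ln k ≤ H(u) ≤ ln n`; the lower bound is attained by the uniform distribution over the
first `k` coordinates and the upper bound by the uniform distribution over `[n]`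
(which lies in `S_{n,k}`). -/
theorem entropy_bounds_on_kSet (n k : ℕ) (hk : 1 ≤ k) (hkn : k ≤ n)
    (H : (Fin n → ℝ) → ℝ)
    (hH : ∀ u, H u = -∑ i, u i * Real.log (u i))
    (S : Set (Fin n → ℝ))
    (hS : S = {p | (∀ i, 0 ≤ p i ∧ p i ≤ 1 / (k : ℝ)) ∧ ∑ i, p i = 1}) :
    (∀ u ∈ S, Real.log k ≤ H u ∧ H u ≤ Real.log n) ∧
    ((fun i : Fin n => if (i : ℕ) < k then 1 / (k : ℝ) else 0) ∈ S ∧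
      H (fun i : Fin n => if (i : ℕ) < k then 1 / (k : ℝ) else 0) = Real.log k) ∧
    ((fun _ : Fin n => 1 / (n : ℝ)) ∈ S ∧
      H (fun _ : Fin n => 1 / (n : ℝ)) = Real.log n) := by
  have hn : 1 ≤ n := le_trans hk hkn
  have hk0 : (0 : ℝ) < k := by exact_mod_cast hk
  have hn0 : (0 : ℝ) < n := by exact_mod_cast hn
  subst hS
  constructor
  · rintro u ⟨hbd, hsum⟩
    constructor
    · -- lower bound
      rw [hH]
      have key : ∀ i : Fin n, u i * Real.log k ≤ -(u i * Real.log (u i)) := by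
        intro i
        rcases eq_or_lt_of_le (hbd i).1 with h | h
        · simp [← h]
        · have hlog : Real.log (u i) ≤ -Real.log k := by
            rw [← Real.log_inv]
            exact Real.log_le_log h (by rw [one_div] at hbd; exact (hbd i).2)
          nlinarith [mul_le_mul_of_nonneg_left hlog (le_of_lt h)]
      calc Real.log k = ∑ i, u i * Real.log k := by
            rw [← Finset.sum_mul, hsum, one_mul]
        _ ≤ ∑ i, -(u i * Real.log (u i)) := Finset.sum_le_sum fun i _ => key i
        _ = -∑ i, u i * Real.log (u i) := by rw [Finset.sum_neg_distrib]
    · -- upper bound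
      rw [hH]
      have key : ∀ i : Fin n, -(u i * Real.log (u i)) ≤ 1 / n - u i + u i * Real.log n := by
        intro i
        rcases eq_or_lt_of_le (hbd i).1 with h | h
        · rw [← h]
          simp only [mul_zero, zero_mul, neg_zero, sub_zero, add_zero]
          positivity
        · have hpos : (0 : ℝ) < n * u i := by positivity
          have := Real.log_le_sub_one_of_pos (show (0:ℝ) < (n * u i)⁻¹ by positivity)
          rw [Real.log_inv, Real.log_mul (ne_of_gt hn0) (ne_of_gt h)] at this
          have h2 := mul_le_mul_of_nonneg_left this (le_of_lt h)
          have h3 : u i * (n * u i)⁻¹ = 1 / n := by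
            field_simp
          nlinarith
      calc -∑ i, u i * Real.log (u i) = ∑ i, -(u i * Real.log (u i)) := by
            rw [Finset.sum_neg_distrib]
        _ ≤ ∑ i, (1 / n - u i + u i * Real.log n) := Finset.sum_le_sum fun i _ => key i
        _ = Real.log n := by
            rw [Finset.sum_add_distrib, Finset.sum_sub_distrib, ← Finset.sum_mul, hsum,
              Finset.sum_const, Finset.card_univ, Fintype.card_fin, nsmul_eq_mul]
            field_simp
            ring
  constructor
  · constructor
    · refine ⟨fun i => ?_, ?_⟩
      · dsimp only
        split
        · exact ⟨by positivity, le_rfl⟩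
        · exact ⟨le_rfl, by positivity⟩
      · rw [sum_ite_lt_fin n k hkn]
        field_simp
    · rw [hH]
      have : ∀ i : Fin n, (if (i : ℕ) < k then 1 / (k : ℝ) else 0) *
          Real.log (if (i : ℕ) < k then 1 / (k : ℝ) else 0) =
          (if (i : ℕ) < k then 1 / (k : ℝ) * Real.log (1 / k) else 0) := by
        intro i; split <;> simp
      rw [Finset.sum_congr rfl fun i _ => this i, sum_ite_lt_fin n k hkn]
      rw [one_div, Real.log_inv]
      field_simp
  · constructor
    · refine ⟨fun i => ?_, ?_⟩
      · constructor
        · positivity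
        · apply div_le_div_of_nonneg_left one_pos.le hk0
          exact_mod_cast hkn
      · rw [Finset.sum_const, Finset.card_univ, Fintype.card_fin, nsmul_eq_mul]
        field_simp
    · rw [hH]
      rw [Finset.sum_const, Finset.card_univ, Fintype.card_fin, nsmul_eq_mul]
      rw [one_div, Real.log_inv]
      field_simp
end

section
/- Let 1 ≤ k ≤ n and let p ∈ S_{n,k}, i.e., 0 ≤ p_i ≤ 1/k for all i and Σ_{i=1}^n p_i = 1. Then the vector k·p lies in the convex hull of the indicator vectors {1_I : I ⊆ [n], |I| = k} (where (1_I)_i = 1 if i ∈ I and 0 otherwise); equivalently, there exists a probability distribution q over the k-element subsets of [n] such that Σ_{I : i ∈ I} q(I) = k·p_i for every i ∈ [n]. -/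
private lemma depround_aux (n k : ℕ) :
    ∀ (m : ℕ) (x : Fin n → ℝ),
      (Finset.univ.filter (fun i => x i ≠ 0 ∧ x i ≠ 1)).card ≤ m →
      (∀ i, 0 ≤ x i ∧ x i ≤ 1) → (∑ i, x i = (k : ℝ)) →
      ∃ q : Finset (Fin n) → ℝ,
        (∀ I, 0 ≤ q I) ∧ (∀ I, q I ≠ 0 → I.card = k) ∧
        (∑ I : Finset (Fin n), q I = 1) ∧
        (∀ i, ∑ I ∈ Finset.univ.filter (fun I : Finset (Fin n) => i ∈ I), q I = x i) := by
  intro m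
  induction m with
  | zero =>
    intro x hcard hx hsum
    have hF : (Finset.univ.filter (fun i => x i ≠ 0 ∧ x i ≠ 1)) = ∅ :=
      Finset.card_eq_zero.mp (Nat.le_zero.mp hcard)
    have hx01 : ∀ i, x i = 0 ∨ x i = 1 := by
      intro i
      by_contra hc
      push_neg at hc
      have : i ∈ Finset.univ.filter (fun i => x i ≠ 0 ∧ x i ≠ 1) := by
        simp [hc.1, hc.2]
      rw [hF] at this
      exact absurd this (Finset.notMem_empty i)
    set I : Finset (Fin n) := Finset.univ.filter (fun i => x i = 1) with hI
    have hsum' : ∑ i, x i = (I.card : ℝ) := by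
      rw [hI]
      rw [← Finset.sum_boole]
      apply Finset.sum_congr rfl
      intro i _
      rcases hx01 i with h | h <;> simp [h]
    have hIcard : I.card = k := by
      have : (I.card : ℝ) = (k : ℝ) := by rw [← hsum', hsum]
      exact_mod_cast this
    refine ⟨fun J => if J = I then 1 else 0, ?_, ?_, ?_, ?_⟩
    · intro J; dsimp only; split <;> norm_num
    · intro J hJ
      by_cases h : J = I
      · rw [h, hIcard]
      · simp [h] at hJ
    · simp
    · intro i
      rw [Finset.sum_ite_eq' (Finset.univ.filter (fun J : Finset (Fin n) => i ∈ J)) I (fun _ => (1:ℝ))]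
      rcases hx01 i with h | h
      · have : i ∉ I := by simp [hI, h]
        simp [this, h]
      · have : i ∈ I := by simp [hI, h]
        simp [this, h]
  | succ m ih =>
    intro x hcard hx hsum
    by_cases hle : (Finset.univ.filter (fun i => x i ≠ 0 ∧ x i ≠ 1)).card ≤ m
    · exact ih x hle hx hsum
    set F : Finset (Fin n) := Finset.univ.filter (fun i => x i ≠ 0 ∧ x i ≠ 1) with hFdef
    have hF1 : F.card ≠ 1 := by
      intro h1
      obtain ⟨i, hFi⟩ := Finset.card_eq_one.mp h1
      have hiF : i ∈ F := by rw [hFi]; exact Finset.mem_singleton_self i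
      have hxi : x i ≠ 0 ∧ x i ≠ 1 := by
        rw [hFdef] at hiF; simpa using hiF
      have hothers : ∀ j, j ≠ i → x j = 0 ∨ x j = 1 := by
        intro j hj
        by_contra hc
        push_neg at hc
        have : j ∈ F := by rw [hFdef]; simp [hc.1, hc.2]
        rw [hFi] at this
        exact hj (Finset.mem_singleton.mp this)
      set A : Finset (Fin n) := (Finset.univ.erase i).filter (fun j => x j = 1) with hA
      have hsumA : ∑ j ∈ Finset.univ.erase i, x j = (A.card : ℝ) := by
        rw [hA, ← Finset.sum_boole]
        apply Finset.sum_congr rfl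
        intro j hjmem
        have hji : j ≠ i := (Finset.mem_erase.mp hjmem).1
        rcases hothers j hji with h | h <;> simp [h]
      have hsplit : x i + ∑ j ∈ Finset.univ.erase i, x j = (k : ℝ) := by
        rw [Finset.add_sum_erase _ _ (Finset.mem_univ i), hsum]
      have hxival : x i = (k : ℝ) - (A.card : ℝ) := by
        rw [hsumA] at hsplit; linarith
      have h0 : 0 < x i := lt_of_le_of_ne (hx i).1 (Ne.symm hxi.1)
      have h1' : x i < 1 := lt_of_le_of_ne (hx i).2 hxi.2
      have hlt : (A.card : ℝ) < (k : ℝ) := by linarith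
      have hlt2 : (k : ℝ) < (A.card : ℝ) + 1 := by linarith
      have h3 : A.card < k := by exact_mod_cast hlt
      have h4 : k < A.card + 1 := by exact_mod_cast hlt2
      omega
    have hF2 : 1 < F.card := by
      have : ¬ F.card ≤ m := hle
      omega
    obtain ⟨i, hi, j, hj, hij⟩ := Finset.one_lt_card.mp hF2
    have hxi : x i ≠ 0 ∧ x i ≠ 1 := by rw [hFdef] at hi; simpa using hi
    have hxj : x j ≠ 0 ∧ x j ≠ 1 := by rw [hFdef] at hj; simpa using hj
    have h0i : 0 < x i := lt_of_le_of_ne (hx i).1 (Ne.symm hxi.1)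
    have h1i : x i < 1 := lt_of_le_of_ne (hx i).2 hxi.2
    have h0j : 0 < x j := lt_of_le_of_ne (hx j).1 (Ne.symm hxj.1)
    have h1j : x j < 1 := lt_of_le_of_ne (hx j).2 hxj.2
    set a : ℝ := min (1 - x i) (x j) with hadef
    set b : ℝ := min (x i) (1 - x j) with hbdef
    have ha : 0 < a := lt_min (by linarith) h0j
    have hb : 0 < b := lt_min h0i (by linarith)
    have hab : 0 < a + b := by linarith
    set y : Fin n → ℝ := fun l => if l = i then x i + a else if l = j then x j - a else x l with hydef
    set z : Fin n → ℝ := fun l => if l = i then x i - b else if l = j then x j + b else x l with hzdef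
    have ha1 : a ≤ 1 - x i := min_le_left _ _
    have ha2 : a ≤ x j := min_le_right _ _
    have hb1 : b ≤ x i := min_le_left _ _
    have hb2 : b ≤ 1 - x j := min_le_right _ _
    have hybound : ∀ l, 0 ≤ y l ∧ y l ≤ 1 := by
      intro l
      rw [hydef]
      dsimp only
      split_ifs with h1 h2
      · constructor <;> linarith
      · constructor <;> linarith
      · exact hx l
    have hzbound : ∀ l, 0 ≤ z l ∧ z l ≤ 1 := by
      intro l
      rw [hzdef]
      dsimp only
      split_ifs with h1 h2
      · constructor <;> linarith
      · constructor <;> linarith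
      · exact hx l
    have hyeq : ∀ l, y l = x l + ((if l = i then a else 0) - (if l = j then a else 0)) := by
      intro l
      rw [hydef]; dsimp only
      by_cases h1 : l = i
      · subst h1; simp [hij]
      · by_cases h2 : l = j
        · subst h2; simp [h1]; ring
        · simp [h1, h2]
    have hzeq : ∀ l, z l = x l + ((if l = j then b else 0) - (if l = i then b else 0)) := by
      intro l
      rw [hzdef]; dsimp only
      by_cases h1 : l = i
      · subst h1; simp [hij]; ring
      · by_cases h2 : l = j
        · subst h2; simp [h1]
        · simp [h1, h2]
    have hysum : ∑ l, y l = (k : ℝ) := by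
      rw [Finset.sum_congr rfl (fun l _ => hyeq l)]
      rw [Finset.sum_add_distrib, Finset.sum_sub_distrib]
      simp [Finset.sum_ite_eq', hsum]
    have hzsum : ∑ l, z l = (k : ℝ) := by
      rw [Finset.sum_congr rfl (fun l _ => hzeq l)]
      rw [Finset.sum_add_distrib, Finset.sum_sub_distrib]
      simp [Finset.sum_ite_eq', hsum]
    -- fractional sets shrink
    have hysub : (Finset.univ.filter (fun l => y l ≠ 0 ∧ y l ≠ 1)) ⊆ F := by
      intro l hl
      simp only [Finset.mem_filter, Finset.mem_univ, true_and] at hl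
      by_cases h1 : l = i
      · subst h1; exact hi
      · by_cases h2 : l = j
        · subst h2; exact hj
        · rw [hFdef]
          have : y l = x l := by rw [hydef]; simp [h1, h2]
          rw [this] at hl
          simp [hl.1, hl.2]
    have hzsub : (Finset.univ.filter (fun l => z l ≠ 0 ∧ z l ≠ 1)) ⊆ F := by
      intro l hl
      simp only [Finset.mem_filter, Finset.mem_univ, true_and] at hl
      by_cases h1 : l = i
      · subst h1; exact hi
      · by_cases h2 : l = j
        · subst h2; exact hj
        · rw [hFdef]
          have : z l = x l := by rw [hzdef]; simp [h1, h2]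
          rw [this] at hl
          simp [hl.1, hl.2]
    have hymem : ∃ l ∈ F, l ∉ (Finset.univ.filter (fun l => y l ≠ 0 ∧ y l ≠ 1)) := by
      rcases min_cases (1 - x i) (x j) with ⟨hmin, _⟩ | ⟨hmin, _⟩
      · refine ⟨i, hi, ?_⟩
        have : y i = 1 := by rw [hydef]; dsimp only; rw [if_pos rfl, hadef, hmin]; ring
        simp [this]
      · refine ⟨j, hj, ?_⟩
        have : y j = 0 := by rw [hydef]; dsimp only; rw [if_neg (Ne.symm hij), if_pos rfl, hadef, hmin]; ring
        simp [this]
    have hzmem : ∃ l ∈ F, l ∉ (Finset.univ.filter (fun l => z l ≠ 0 ∧ z l ≠ 1)) := by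
      rcases min_cases (x i) (1 - x j) with ⟨hmin, _⟩ | ⟨hmin, _⟩
      · refine ⟨i, hi, ?_⟩
        have : z i = 0 := by rw [hzdef]; dsimp only; rw [if_pos rfl, hbdef, hmin]; ring
        simp [this]
      · refine ⟨j, hj, ?_⟩
        have : z j = 1 := by rw [hzdef]; dsimp only; rw [if_neg (Ne.symm hij), if_pos rfl, hbdef, hmin]; ring
        simp [this]
    have hycard : (Finset.univ.filter (fun l => y l ≠ 0 ∧ y l ≠ 1)).card ≤ m := by
      obtain ⟨l, hl1, hl2⟩ := hymem
      have hss : (Finset.univ.filter (fun l => y l ≠ 0 ∧ y l ≠ 1)) ⊂ F :=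
        Finset.ssubset_iff_of_subset hysub |>.mpr ⟨l, hl1, hl2⟩
      have := Finset.card_lt_card hss
      omega
    have hzcard : (Finset.univ.filter (fun l => z l ≠ 0 ∧ z l ≠ 1)).card ≤ m := by
      obtain ⟨l, hl1, hl2⟩ := hzmem
      have hss : (Finset.univ.filter (fun l => z l ≠ 0 ∧ z l ≠ 1)) ⊂ F :=
        Finset.ssubset_iff_of_subset hzsub |>.mpr ⟨l, hl1, hl2⟩
      have := Finset.card_lt_card hss
      omega
    obtain ⟨qy, hqy0, hqyk, hqys, hqym⟩ := ih y hycard hybound hysum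
    obtain ⟨qz, hqz0, hqzk, hqzs, hqzm⟩ := ih z hzcard hzbound hzsum
    have hconv : ∀ l, (b / (a + b)) * y l + (a / (a + b)) * z l = x l := by
      intro l
      rw [hydef, hzdef]; dsimp only
      by_cases h1 : l = i
      · subst h1; simp only [if_pos rfl, ↓reduceIte]; field_simp; ring
      · by_cases h2 : l = j
        · subst h2; simp only [if_neg h1, if_pos rfl, ↓reduceIte]; field_simp; ring
        · simp only [if_neg h1, if_neg h2]; field_simp; ring
    refine ⟨fun I => (b / (a + b)) * qy I + (a / (a + b)) * qz I, ?_, ?_, ?_, ?_⟩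
    · intro I
      dsimp only
      have : 0 ≤ b / (a + b) := by positivity
      have : 0 ≤ a / (a + b) := by positivity
      have := hqy0 I
      have := hqz0 I
      positivity
    · intro I hI
      by_cases hy' : qy I ≠ 0
      · exact hqyk I hy'
      · push_neg at hy'
        by_cases hz' : qz I ≠ 0
        · exact hqzk I hz'
        · push_neg at hz'
          exact absurd (by dsimp only; rw [hy', hz']; ring) hI
    · dsimp only
      rw [Finset.sum_add_distrib, ← Finset.mul_sum, ← Finset.mul_sum, hqys, hqzs]
      field_simp; ring
    · intro l
      dsimp only
      rw [Finset.sum_add_distrib, ← Finset.mul_sum, ← Finset.mul_sum, hqym l, hqzm l]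
      exact hconv l

/-- DepRound correctness: for any `p` in the `k`-set `S_{n,k}`, the vector `k·p` lies in
the convex hull of the indicator vectors of `k`-element subsets of `[n]`; equivalently,
there is a probability distribution `q` over `k`-element subsets whose marginals satisfy
`Σ_{I ∋ i} q(I) = k·p_i` for every `i`. -/
theorem kSet_scaled_mem_convexHull_indicators (n k : ℕ) (hk : 1 ≤ k) (hkn : k ≤ n)
    (p : Fin n → ℝ) (hp : ∀ i, 0 ≤ p i ∧ p i ≤ 1 / (k : ℝ)) (hpsum : ∑ i, p i = 1) :
    (fun i => (k : ℝ) * p i) ∈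
      convexHull ℝ {x : Fin n → ℝ | ∃ I : Finset (Fin n), I.card = k ∧
        x = fun i => if i ∈ I then (1 : ℝ) else 0} ∧
    ∃ q : Finset (Fin n) → ℝ,
      (∀ I, 0 ≤ q I) ∧
      (∀ I, q I ≠ 0 → I.card = k) ∧
      (∑ I : Finset (Fin n), q I = 1) ∧
      (∀ i, ∑ I ∈ Finset.univ.filter (fun I : Finset (Fin n) => i ∈ I), q I
        = (k : ℝ) * p i) := by
  have hk0 : (0 : ℝ) < (k : ℝ) := by exact_mod_cast hk
  set x : Fin n → ℝ := fun i => (k : ℝ) * p i with hxdef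
  have hxb : ∀ i, 0 ≤ x i ∧ x i ≤ 1 := by
    intro i
    constructor
    · exact mul_nonneg (le_of_lt hk0) (hp i).1
    · have := (hp i).2
      rw [hxdef]
      calc (k : ℝ) * p i ≤ (k : ℝ) * (1 / (k : ℝ)) := by
            exact mul_le_mul_of_nonneg_left this (le_of_lt hk0)
        _ = 1 := by field_simp
  have hxs : ∑ i, x i = (k : ℝ) := by
    rw [hxdef]
    rw [← Finset.mul_sum, hpsum, mul_one]
  obtain ⟨q, hq0, hqk, hqs, hqm⟩ :=
    depround_aux n k (Finset.univ.filter (fun i => x i ≠ 0 ∧ x i ≠ 1)).card x le_rfl hxb hxs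
  refine ⟨?_, q, hq0, hqk, hqs, hqm⟩
  -- convex hull membership
  obtain ⟨I0, _, hI0⟩ := Finset.exists_subset_card_eq (show k ≤ (Finset.univ : Finset (Fin n)).card by simpa using hkn)
  set S : Set (Fin n → ℝ) := {x : Fin n → ℝ | ∃ I : Finset (Fin n), I.card = k ∧
        x = fun i => if i ∈ I then (1 : ℝ) else 0} with hSdef
  set zf : Finset (Fin n) → (Fin n → ℝ) := fun I =>
    if q I = 0 then (fun i => if i ∈ I0 then (1:ℝ) else 0) else (fun i => if i ∈ I then (1:ℝ) else 0) with hzf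
  have hz : ∀ I ∈ (Finset.univ : Finset (Finset (Fin n))), zf I ∈ S := by
    intro I _
    rw [hzf]
    dsimp only
    split_ifs with h
    · exact ⟨I0, hI0, rfl⟩
    · exact ⟨I, hqk I h, rfl⟩
  have hws : 0 < ∑ I : Finset (Fin n), q I := by rw [hqs]; norm_num
  have hmem := Finset.centerMass_mem_convexHull (Finset.univ : Finset (Finset (Fin n)))
    (fun I _ => hq0 I) hws hz
  have hcm : (Finset.univ : Finset (Finset (Fin n))).centerMass q zf = fun i => (k : ℝ) * p i := by
    rw [Finset.centerMass_eq_of_sum_1 _ _ hqs]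
    funext l
    rw [Finset.sum_apply]
    have step : ∀ I : Finset (Fin n), (q I • zf I) l = if l ∈ I then q I else 0 := by
      intro I
      rw [hzf]
      dsimp only [Pi.smul_apply, smul_eq_mul]
      by_cases h : q I = 0
      · simp [h]
      · rw [if_neg h]
        split_ifs <;> ring
    rw [Finset.sum_congr rfl (fun I _ => step I)]
    rw [← Finset.sum_filter]
    exact hqm l
  rw [hcm] at hmem
  exact hmem
end

section
/- Let X_1, …, X_T be real-valued random variables adapted to a filtration, let R > 0, and write E_t[Y] = E[Y | X_1, …, X_{t−1}]. Assume X_t ≤ R almost surely and E_t[X_t] = 0 for all t. Define S = Σ_{t=1}^T X_t and σ = Σ_{t=1}^T E_t[X_t^2]. Then for any δ > 0 and any constant σ' ≥ R^2·ln(1/δ)/(e − 2), with probability at least 1 − δ one has S ≤ √((e−2)·ln(1/δ)) · ( σ/√σ' + √σ' ). -/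
set_option maxHeartbeats 1000000

open MeasureTheory

lemma exp_series' (y : ℝ) : Real.exp y = ∑' n : ℕ, y ^ n / n.factorial := by
  rw [Real.exp_eq_exp_ℝ, NormedSpace.exp_eq_tsum_div]

lemma exp_eq_shift' (x : ℝ) :
    Real.exp x = 1 + x + ∑' n : ℕ, x ^ (n + 2) / (n + 2).factorial := by
  have hsum := Real.summable_pow_div_factorial x
  have hsum1 : Summable (fun n : ℕ => x ^ (n + 1) / (n + 1).factorial) :=
    (summable_nat_add_iff 1).2 hsum
  rw [exp_series' x, hsum.tsum_eq_zero_add, hsum1.tsum_eq_zero_add]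
  simp [Nat.factorial]
  ring

lemma exp_le_quad_pos {y : ℝ} (h0 : 0 ≤ y) (h1 : y ≤ 1) :
    Real.exp y ≤ 1 + y + (Real.exp 1 - 2) * y ^ 2 := by
  have he : (Real.exp 1 - 2) = ∑' n : ℕ, (1:ℝ) ^ (n + 2) / (n + 2).factorial := by
    have := exp_eq_shift' 1
    linarith
  have hsy : Summable (fun n : ℕ => y ^ (n + 2) / (n + 2).factorial) :=
    (summable_nat_add_iff 2).2 (Real.summable_pow_div_factorial y)
  have hs1 : Summable (fun n : ℕ => (1:ℝ) ^ (n + 2) / (n + 2).factorial) :=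
    (summable_nat_add_iff 2).2 (Real.summable_pow_div_factorial 1)
  have hterm : ∀ n : ℕ, y ^ (n + 2) / (n + 2).factorial ≤
      y ^ 2 * ((1:ℝ) ^ (n + 2) / (n + 2).factorial) := by
    intro n
    rw [one_pow, div_le_iff₀ (by positivity), mul_assoc,
      one_div_mul_cancel (by positivity), mul_one]
    exact pow_le_pow_of_le_one h0 h1 (by omega)
  have hle : ∑' n : ℕ, y ^ (n + 2) / (n + 2).factorial ≤
      y ^ 2 * ∑' n : ℕ, (1:ℝ) ^ (n + 2) / (n + 2).factorial := by
    rw [← tsum_mul_left]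
    exact Summable.tsum_le_tsum hterm hsy (hs1.mul_left _)
  rw [exp_eq_shift' y, he]
  nlinarith [hle]

lemma exp_le_quad_neg {y : ℝ} (hy : y ≤ 0) : Real.exp y ≤ 1 + y + y ^ 2 / 2 := by
  have hd : ∀ x : ℝ, HasDerivAt (fun x : ℝ => Real.exp x - 1 - x - x ^ 2 / 2)
      (Real.exp x - 1 - x) x := by
    intro x
    have h3 := (((Real.hasDerivAt_exp x).sub_const 1).sub (hasDerivAt_id x)).sub
      ((hasDerivAt_pow 2 x).div_const 2)
    refine h3.congr_deriv ?_
    push_cast; ring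
  have hmono : Monotone (fun x : ℝ => Real.exp x - 1 - x - x ^ 2 / 2) := by
    apply monotone_of_deriv_nonneg
    · exact fun x => (hd x).differentiableAt
    · intro x
      rw [(hd x).deriv]
      linarith [Real.add_one_le_exp x]
  have := hmono hy
  simp only [Real.exp_zero] at this
  norm_num at this
  linarith

lemma exp_le_quadratic {y : ℝ} (h1 : y ≤ 1) :
    Real.exp y ≤ 1 + y + (Real.exp 1 - 2) * y ^ 2 := by
  rcases le_or_gt y 0 with h0 | h0
  · have h := exp_le_quad_neg h0
    have he : (2.7182818283 : ℝ) < Real.exp 1 := Real.exp_one_gt_d9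
    nlinarith [sq_nonneg y]
  · exact exp_le_quad_pos h0.le h1

/-- Freedman-style concentration (Theorem 1 of Beygelzimer et al.): if `X_1, …, X_T` are
martingale differences w.r.t. their natural filtration (`E_t[X_t] = 0`, where
`E_t[·] = E[· | X_1, …, X_{t−1}]`), bounded above by `R`, then writing
`S = Σ_t X_t` and `σ = Σ_t E_t[X_t²]`, for any `δ > 0` and any constant
`σ' ≥ R²·ln(1/δ)/(e−2)`, with probability at least `1 − δ` we have
`S ≤ √((e−2)·ln(1/δ)) · (σ/√σ' + √σ')`. -/
theorem martingale_concentration {Ω : Type*} [m0 : MeasurableSpace Ω]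
    (P : Measure Ω) [IsProbabilityMeasure P]
    (T : ℕ) (X : ℕ → Ω → ℝ)
    (hXmeas : ∀ t, Measurable (X t))
    (hXint : ∀ t, Integrable (X t) P)
    (hX2int : ∀ t, Integrable (fun ω => (X t ω) ^ 2) P)
    (F : ℕ → MeasurableSpace Ω)
    (hF : ∀ t, F t =
      ⨆ s ∈ Finset.range t, MeasurableSpace.comap (X s) Real.measurableSpace)
    (R : ℝ) (hR : 0 < R)
    (hbdd : ∀ t, ∀ᵐ ω ∂P, X t ω ≤ R)
    (hmart : ∀ t, P[X t | F t] =ᵐ[P] 0)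
    (δ : ℝ) (hδ : 0 < δ)
    (σ' : ℝ) (hσ' : R ^ 2 * Real.log (1 / δ) / (Real.exp 1 - 2) ≤ σ') :
    ENNReal.ofReal (1 - δ) ≤
      P {ω | ∑ t ∈ Finset.range T, X t ω ≤
        Real.sqrt ((Real.exp 1 - 2) * Real.log (1 / δ)) *
          ((∑ t ∈ Finset.range T, (P[fun ω' => (X t ω') ^ 2 | F t]) ω) / Real.sqrt σ' +
            Real.sqrt σ')} := by
  classical
  by_cases hδ1 : 1 ≤ δ
  · calc ENNReal.ofReal (1 - δ) = 0 := by
          rw [ENNReal.ofReal_eq_zero]; linarith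
    _ ≤ _ := zero_le
  push_neg at hδ1
  set c : ℝ := Real.exp 1 - 2 with hc
  have hc0 : 0 < c := by
    have := Real.exp_one_gt_d9
    rw [hc]; linarith
  set L : ℝ := Real.log (1 / δ) with hLdef
  have hL0 : 0 < L := Real.log_pos (by rw [lt_div_iff₀ hδ]; linarith)
  have hσ'0 : 0 < σ' := lt_of_lt_of_le (by positivity) hσ'
  have hRL : R ^ 2 * L ≤ c * σ' := by
    rw [div_le_iff₀ hc0] at hσ'
    linarith
  set l : ℝ := Real.sqrt (L / (c * σ')) with hldef
  have hl0 : 0 < l := Real.sqrt_pos.2 (by positivity)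
  have hlsq : l ^ 2 = L / (c * σ') := Real.sq_sqrt (by positivity)
  have hlR : l * R ≤ 1 := by
    have h2 : (l * R) ^ 2 ≤ 1 := by
      rw [mul_pow, hlsq, div_mul_eq_mul_div, div_le_one (by positivity)]
      nlinarith
    exact (pow_le_one_iff_of_nonneg (by positivity) two_ne_zero).1 h2
  set Y : ℕ → Ω → ℝ := fun t => P[fun ω' => (X t ω') ^ 2 | F t] with hYdef
  set G : ℕ → Ω → ℝ := fun n ω =>
    ∑ s ∈ Finset.range n, (l * X s ω - c * l ^ 2 * Y s ω) with hGdef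
  set M : ℕ → Ω → ℝ := fun n ω => Real.exp (G n ω) with hMdef
  -- basic measurability facts
  have hFle : ∀ t, F t ≤ m0 := by
    intro t
    rw [hF]
    exact iSup₂_le fun s _ => measurable_iff_comap_le.1 (hXmeas s)
  have hFmono : Monotone F := by
    intro a b hab
    rw [hF a, hF b]
    exact iSup₂_le fun s hs =>
      le_iSup₂ (f := fun s (_ : s ∈ Finset.range b) =>
          MeasurableSpace.comap (X s) Real.measurableSpace) s
        (Finset.mem_range.2 (lt_of_lt_of_le (Finset.mem_range.1 hs) hab))
  have hXmF : ∀ s t, s < t → Measurable[F t] (X s) := by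
    intro s t hst
    apply measurable_iff_comap_le.2
    rw [hF t]
    exact le_iSup₂ (f := fun s (_ : s ∈ Finset.range t) =>
        MeasurableSpace.comap (X s) Real.measurableSpace) s (Finset.mem_range.2 hst)
  have hYsm : ∀ t, StronglyMeasurable[F t] (Y t) := fun t => stronglyMeasurable_condExp
  have hYint : ∀ t, Integrable (Y t) P := fun t => integrable_condExp
  have hY0 : ∀ t, 0 ≤ᵐ[P] Y t := fun t =>
    condExp_nonneg (Filter.Eventually.of_forall fun ω => sq_nonneg _)
  have hGsm : ∀ n, StronglyMeasurable[F n] (G n) := by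
    intro n
    apply Finset.stronglyMeasurable_fun_sum
    intro s hs
    have hs' := Finset.mem_range.1 hs
    exact (((hXmF s n hs').stronglyMeasurable).const_mul l).sub
      (((hYsm s).mono (hFmono hs'.le)).const_mul _)
  -- a.e. bound on M
  have hbdd_all : ∀ᵐ ω ∂P, ∀ s, X s ω ≤ R := (ae_all_iff).2 hbdd
  have hY0_all : ∀ᵐ ω ∂P, ∀ s, 0 ≤ Y s ω := (ae_all_iff).2 hY0
  have hMbd : ∀ᵐ ω ∂P, ∀ n, M n ω ≤ Real.exp (n * (l * R)) := by
    filter_upwards [hbdd_all, hY0_all] with ω hXb hYb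
    intro n
    apply Real.exp_le_exp.2
    calc G n ω ≤ ∑ s ∈ Finset.range n, l * R := by
          apply Finset.sum_le_sum
          intro s _
          have h1 : l * X s ω ≤ l * R := mul_le_mul_of_nonneg_left (hXb s) hl0.le
          have h2 : 0 ≤ c * l ^ 2 * Y s ω := mul_nonneg (by positivity) (hYb s)
          linarith
    _ = n * (l * R) := by rw [Finset.sum_const, Finset.card_range, nsmul_eq_mul]
  have hMint : ∀ n, Integrable (M n) P := by
    intro n
    apply Integrable.mono' (integrable_const (Real.exp (n * (l * R))))
    · exact (Real.continuous_exp.comp_stronglyMeasurable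
        ((hGsm n).mono (hFle n))).aestronglyMeasurable
    · filter_upwards [hMbd] with ω h
      rw [Real.norm_eq_abs, abs_of_pos (Real.exp_pos _)]
      exact h n
  -- per-step: conditional expectation bound
  have hgint : ∀ n, Integrable (fun ω => Real.exp (l * X n ω)) P := by
    intro n
    apply Integrable.mono'
      (((integrable_const (1:ℝ)).add ((hXint n).const_mul l)).add ((hX2int n).const_mul (c * l ^ 2)))
    · exact (Real.measurable_exp.comp ((hXmeas n).const_mul l)).aestronglyMeasurable
    · filter_upwards [hbdd n] with ω hb
      rw [Real.norm_eq_abs, abs_of_pos (Real.exp_pos _)]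
      have hy1 : l * X n ω ≤ 1 := le_trans (mul_le_mul_of_nonneg_left hb hl0.le) hlR
      have := exp_le_quadratic hy1
      simp only [Pi.add_apply]
      calc Real.exp (l * X n ω) ≤ 1 + l * X n ω + c * (l * X n ω) ^ 2 := this
      _ = 1 + l * X n ω + c * l ^ 2 * X n ω ^ 2 := by ring
  have hkey : ∀ n, (P[fun ω => Real.exp (l * X n ω)|F n]) ≤ᵐ[P]
      fun ω => Real.exp (c * l ^ 2 * Y n ω) := by
    intro n
    have hq : Integrable ((fun _ => (1:ℝ)) + l • X n + (c * l ^ 2) • fun ω => (X n ω) ^ 2) P := by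
      exact ((integrable_const (1:ℝ)).add ((hXint n).smul l)).add ((hX2int n).smul (c * l ^ 2))
    have hmono : P[fun ω => Real.exp (l * X n ω)|F n] ≤ᵐ[P]
        P[(fun _ => (1:ℝ)) + l • X n + (c * l ^ 2) • fun ω => (X n ω) ^ 2|F n] := by
      apply condExp_mono (hgint n) hq
      filter_upwards [hbdd n] with ω hb
      have hy1 : l * X n ω ≤ 1 := le_trans (mul_le_mul_of_nonneg_left hb hl0.le) hlR
      have := exp_le_quadratic hy1
      simp only [Pi.add_apply, Pi.smul_apply, smul_eq_mul]
      calc Real.exp (l * X n ω) ≤ 1 + l * X n ω + c * (l * X n ω) ^ 2 := this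
      _ = 1 + l * X n ω + c * l ^ 2 * X n ω ^ 2 := by ring
    have he1 : P[(fun _ => (1:ℝ)) + l • X n + (c * l ^ 2) • fun ω => (X n ω) ^ 2|F n]
        =ᵐ[P] P[(fun _ => (1:ℝ)) + l • X n|F n]
          + P[(c * l ^ 2) • fun ω => (X n ω) ^ 2|F n] :=
      condExp_add ((integrable_const (1:ℝ)).add ((hXint n).smul l)) ((hX2int n).smul (c * l ^ 2)) _
    have he2 : P[(fun _ => (1:ℝ)) + l • X n|F n]
        =ᵐ[P] P[(fun _ => (1:ℝ))|F n] + P[l • X n|F n] :=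
      condExp_add (integrable_const (1:ℝ)) ((hXint n).smul l) _
    have he3 : P[(fun _ => (1:ℝ)) | F n] = fun _ => (1:ℝ) := condExp_const (hFle n) 1
    have he4 : P[l • X n|F n] =ᵐ[P] l • P[X n|F n] := condExp_smul l (X n) _
    have he5 : P[(c * l ^ 2) • fun ω => (X n ω) ^ 2|F n]
        =ᵐ[P] (c * l ^ 2) • P[fun ω => (X n ω) ^ 2|F n] := condExp_smul (c * l ^ 2) _ _
    filter_upwards [hmono, he1, he2, he4, he5, hmart n] with ω h0 h1 h2 h4 h5 hm
    have hYn : (P[fun ω' => (X n ω') ^ 2|F n]) ω = Y n ω := by rw [hYdef]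
    calc (P[fun ω => Real.exp (l * X n ω)|F n]) ω
        ≤ (P[(fun _ => (1:ℝ)) + l • X n + (c * l ^ 2) • fun ω => (X n ω) ^ 2|F n]) ω := h0
    _ = (P[(fun _ => (1:ℝ)) + l • X n|F n]) ω
          + (P[(c * l ^ 2) • fun ω => (X n ω) ^ 2|F n]) ω := h1
    _ = (P[(fun _ => (1:ℝ))|F n]) ω + (P[l • X n|F n]) ω
          + (P[(c * l ^ 2) • fun ω => (X n ω) ^ 2|F n]) ω := by rw [h2]; rfl
    _ = 1 + l * (P[X n|F n]) ω + (c * l ^ 2) * Y n ω := by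
          rw [he3, h4, h5]
          simp only [Pi.add_apply, Pi.smul_apply, smul_eq_mul]
          rfl
    _ = 1 + (c * l ^ 2) * Y n ω := by rw [hm]; simp
    _ ≤ Real.exp (c * l ^ 2 * Y n ω) := by
          have := Real.add_one_le_exp (c * l ^ 2 * Y n ω)
          linarith
  -- induction: E[M n] ≤ 1
  have hEM : ∀ n, ∫ ω, M n ω ∂P ≤ 1 := by
    intro n
    induction n with
    | zero =>
      simp only [hMdef, hGdef, Finset.range_zero, Finset.sum_empty, Real.exp_zero]
      simp
    | succ n ih =>
      set A : Ω → ℝ := fun ω => Real.exp (G n ω - c * l ^ 2 * Y n ω) with hA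
      have hMeq : M (n + 1) = fun ω => A ω * Real.exp (l * X n ω) := by
        funext ω
        simp only [hMdef, hGdef, hA, Finset.sum_range_succ, ← Real.exp_add]
        congr 1
        ring
      have hAsm : StronglyMeasurable[F n] A :=
        Real.continuous_exp.comp_stronglyMeasurable ((hGsm n).sub ((hYsm n).const_mul _))
      have hM1int : Integrable (A * fun ω => Real.exp (l * X n ω)) P := by
        have := hMint (n + 1)
        rw [hMeq] at this
        exact this
      have hpull : P[A * fun ω => Real.exp (l * X n ω)|F n]
          =ᵐ[P] A * P[fun ω => Real.exp (l * X n ω)|F n] :=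
        condExp_mul_of_stronglyMeasurable_left hAsm hM1int (hgint n)
      have step1 : ∫ ω, M (n + 1) ω ∂P
          = ∫ ω, (P[A * fun ω => Real.exp (l * X n ω)|F n]) ω ∂P := by
        rw [integral_condExp (hFle n), hMeq]
        simp only [Pi.mul_apply]
      have step2 : ∫ ω, (P[A * fun ω => Real.exp (l * X n ω)|F n]) ω ∂P
          ≤ ∫ ω, M n ω ∂P := by
        apply integral_mono_ae integrable_condExp (hMint n)
        filter_upwards [hpull, hkey n] with ω hp hk
        rw [hp]
        have hApos : 0 < A ω := Real.exp_pos _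
        calc A ω * (P[fun ω => Real.exp (l * X n ω)|F n]) ω
            ≤ A ω * Real.exp (c * l ^ 2 * Y n ω) := by
              exact mul_le_mul_of_nonneg_left hk hApos.le
        _ = M n ω := by
              simp only [hA, hMdef, ← Real.exp_add]
              congr 1
              ring
      calc ∫ ω, M (n + 1) ω ∂P ≤ ∫ ω, M n ω ∂P := step1 ▸ step2
      _ ≤ 1 := ih
  -- Markov's inequality
  have hMarkov : (P {ω | 1 / δ ≤ M T ω}).toReal ≤ δ := by
    have h := mul_meas_ge_le_integral_of_nonneg
      (Filter.Eventually.of_forall fun ω => (Real.exp_pos (G T ω)).le) (hMint T) (1 / δ)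
    have h2 : (1 / δ) * (P {ω | 1 / δ ≤ M T ω}).toReal ≤ 1 := le_trans h (hEM T)
    rw [div_mul_eq_mul_div, div_le_one hδ, one_mul] at h2
    exact h2
  -- algebra: the event inclusion
  set B : Ω → ℝ := fun ω => Real.sqrt (c * L) *
    ((∑ t ∈ Finset.range T, Y t ω) / Real.sqrt σ' + Real.sqrt σ') with hBdef
  have hGT : ∀ ω, G T ω = l * (∑ t ∈ Finset.range T, X t ω)
      - c * l ^ 2 * (∑ t ∈ Finset.range T, Y t ω) := by
    intro ω
    simp only [hGdef, Finset.mul_sum, Finset.sum_sub_distrib]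
  have hident : ∀ ω, l * B ω - c * l ^ 2 * (∑ t ∈ Finset.range T, Y t ω) = L := by
    intro ω
    have hsq : Real.sqrt σ' * Real.sqrt σ' = σ' := Real.mul_self_sqrt hσ'0.le
    have hsqpos : 0 < Real.sqrt σ' := Real.sqrt_pos.2 hσ'0
    have hlcl : l * Real.sqrt (c * L) = L / Real.sqrt σ' := by
      rw [hldef, ← Real.sqrt_mul (by positivity)]
      have : L / (c * σ') * (c * L) = (L / Real.sqrt σ') ^ 2 := by
        rw [div_pow, Real.sq_sqrt hσ'0.le]
        field_simp
      rw [this, Real.sqrt_sq (by positivity)]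
    have hcl2 : c * l ^ 2 = L / σ' := by
      rw [hlsq]
      field_simp
    rw [hBdef]
    simp only
    rw [← mul_assoc, hlcl, hcl2]
    field_simp
    rw [Real.sq_sqrt hσ'0.le]
    ring
  -- conclusion
  set E : Set Ω := {ω | ∑ t ∈ Finset.range T, X t ω ≤
      Real.sqrt (c * L) *
        ((∑ t ∈ Finset.range T, (P[fun ω' => (X t ω') ^ 2 | F t]) ω) / Real.sqrt σ' +
          Real.sqrt σ')} with hEdef
  have hEB : E = {ω | ∑ t ∈ Finset.range T, X t ω ≤ B ω} := by
    rw [hEdef, hBdef]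
  have hsub : Eᶜ ⊆ {ω | 1 / δ ≤ M T ω} := by
    intro ω hω
    rw [hEB] at hω
    simp only [Set.mem_compl_iff, Set.mem_setOf_eq, not_le] at hω
    simp only [Set.mem_setOf_eq, hMdef]
    rw [show (1:ℝ)/δ = Real.exp L by rw [hLdef, Real.exp_log (by positivity)]]
    apply Real.exp_le_exp.2
    rw [hGT ω]
    have := hident ω
    nlinarith [hl0]
  have hEmeas : MeasurableSet E := by
    rw [hEB]
    apply measurableSet_le
    · exact Finset.measurable_sum _ fun t _ => hXmeas t
    · apply Measurable.const_mul
      apply Measurable.add_const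
      apply Measurable.div_const
      exact Finset.measurable_sum _ fun t _ =>
        (stronglyMeasurable_condExp.mono (hFle t)).measurable
  have hcompl : P Eᶜ ≤ ENNReal.ofReal δ := by
    have h1 : P Eᶜ ≤ P {ω | 1 / δ ≤ M T ω} := measure_mono hsub
    have h2 : P {ω | 1 / δ ≤ M T ω} ≤ ENNReal.ofReal δ := by
      rw [← ENNReal.ofReal_toReal (measure_ne_top P _)]
      exact ENNReal.ofReal_le_ofReal hMarkov
    exact le_trans h1 h2
  have hPE : P Eᶜ = 1 - P E := by
    rw [measure_compl hEmeas (measure_ne_top P E), measure_univ]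
  have hgoal : ENNReal.ofReal (1 - δ) ≤ P E := by
    rw [ENNReal.ofReal_sub 1 hδ.le, ENNReal.ofReal_one]
    rw [tsub_le_iff_right]
    rw [hPE] at hcompl
    have := tsub_le_iff_right.1 hcompl
    calc (1:ENNReal) ≤ ENNReal.ofReal δ + P E := this
    _ = P E + ENNReal.ofReal δ := add_comm _ _
  exact hgoal
end
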